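/- arXiv:2305.08735 — 10 statements merged into one kernel-verified Lean document; each statement's English description precedes it below -/
import Mathlib

section
/- (Non-strict projection lemma) Let Q ∈ ℍ^p be Hermitian, U ∈ ℂ^{m×p}, V ∈ ℂ^{n×p}. There exists X ∈ ℂ^{m×n} such that Q + Uᴴ X V + Vᴴ Xᴴ U ⪰ 0 if and only if (i) Uₚᴴ Q Uₚ ⪰ 0 and Vₚᴴ Q Vₚ ⪰ 0, where Uₚ, Vₚ are matrices whose columns span ker U and ker V, and (ii) every ξ ∈ ker U ∩ ker V with ξᴴ Q ξ = 0 lies in ker Q. -/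
/-!
Necessity: on `ker U` and on `ker V` the quadratic form of `Uᴴ X V + Vᴴ Xᴴ U` vanishes, and on
`N = ker U ⊓ ker V` the matrix itself does.

Sufficiency: condition (ii) yields a `Q`-orthogonal projection `E` onto `N`, so that
`Q = Eᴴ Q E + G` with `G = (1 - E)ᴴ Q (1 - E)` vanishing on `N` and nonnegative on `ker U` and
`ker V`. The matrices `Uᴴ X V` are exactly the `A` with `ker V ≤ ker A` and `ker U ≤ ker Aᴴ`.
Taking `a` (resp. `b`) projecting `ker U + ker V` onto `ker U` along `ker V` (resp. the other way),
modulo `N`, such an `A` removes every block of `G` except `aᴴ G a + bᴴ G b`, which together with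
`Eᴴ Q E` is positive semidefinite. All factorizations and projections come from generalized
inverses `A W A = A`.
-/

open Matrix
open scoped ComplexOrder

theorem LinearMap.exists_comp_comp_eq_self {K V W : Type*} [DivisionRing K] [AddCommGroup V]
    [Module K V] [AddCommGroup W] [Module K W] (f : V →ₗ[K] W) :
    ∃ g : W →ₗ[K] V, f ∘ₗ g ∘ₗ f = f := by
  obtain ⟨s, hs⟩ := f.rangeRestrict.exists_rightInverse_of_surjective f.range_rangeRestrict
  obtain ⟨i, hi⟩ := f.range.subtype.exists_leftInverse_of_injective f.range.ker_subtype
  refine ⟨s ∘ₗ i, LinearMap.ext fun x => ?_⟩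
  have hx : f x = f.range.subtype (f.rangeRestrict x) := rfl
  simp only [LinearMap.comp_apply]
  rw [hx, ← LinearMap.comp_apply i, hi, LinearMap.id_apply]
  exact congrArg Subtype.val (LinearMap.congr_fun hs _)

namespace Matrix

variable {K : Type*} {k l m n : Type*} [Fintype n]

theorem mul_mul_eq_of_ker_le [Fintype m] [Ring K] {A : Matrix m n K} {W : Matrix n m K}
    (hW : A * W * A = A) {B : Matrix k n K} (h : ∀ x, A *ᵥ x = 0 → B *ᵥ x = 0) : B * W * A = B := by
  refine mulVec_injective (funext fun x => ?_)
  have hker : A *ᵥ (x - W *ᵥ (A *ᵥ x)) = 0 := by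
    rw [mulVec_sub, mulVec_mulVec, mulVec_mulVec, hW, sub_self]
  simpa only [mulVec_sub, mulVec_mulVec, Matrix.mul_assoc, sub_eq_zero, eq_comm] using h _ hker

section Field

variable [Field K] [DecidableEq n]

theorem exists_mul_mul_eq_self [Fintype m] [DecidableEq m] (A : Matrix m n K) :
    ∃ W : Matrix n m K, A * W * A = A := by
  obtain ⟨g, hg⟩ := (toLin' A).exists_comp_comp_eq_self
  refine ⟨LinearMap.toMatrix' g, toLin'.injective ?_⟩
  rw [toLin'_mul, toLin'_mul, toLin'_toMatrix', LinearMap.comp_assoc]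
  exact hg

theorem exists_eq_mul_of_ker_le [Fintype m] [DecidableEq m] {A : Matrix m n K} {B : Matrix k n K}
    (h : ∀ x, A *ᵥ x = 0 → B *ᵥ x = 0) : ∃ C : Matrix k m K, B = C * A :=
  let ⟨W, hW⟩ := exists_mul_mul_eq_self A
  ⟨B * W, (mul_mul_eq_of_ker_le hW h).symm⟩

theorem exists_mul_eq_zero_and_mulVec_eq_self [Fintype m] [DecidableEq m] (A : Matrix m n K) :
    ∃ P : Matrix n n K, A * P = 0 ∧ ∀ x, A *ᵥ x = 0 → P *ᵥ x = x := by
  obtain ⟨W, hW⟩ := exists_mul_mul_eq_self A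
  refine ⟨1 - W * A, ?_, fun x hx => ?_⟩
  · rw [Matrix.mul_sub, Matrix.mul_one, ← Matrix.mul_assoc, hW, sub_self]
  · rw [sub_mulVec, one_mulVec, ← mulVec_mulVec, hx, mulVec_zero, sub_zero]

theorem exists_proj_ker_inf_ker [Fintype l] [Fintype m] [DecidableEq l] [DecidableEq m]
    (U : Matrix l n K) (V : Matrix m n K) :
    ∃ P : Matrix n n K, U * P = 0 ∧ V * P = 0 ∧
      ∀ x, U *ᵥ x = 0 → V *ᵥ x = 0 → P *ᵥ x = x := by
  obtain ⟨P, hUP, hP⟩ := exists_mul_eq_zero_and_mulVec_eq_self U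
  obtain ⟨P', hVP', hP'⟩ := exists_mul_eq_zero_and_mulVec_eq_self (V * P)
  refine ⟨P * P', by rw [← Matrix.mul_assoc, hUP, Matrix.zero_mul],
    by rw [← Matrix.mul_assoc, hVP'], fun x hUx hVx => ?_⟩
  have hVPx : (V * P) *ᵥ x = 0 := by rw [← mulVec_mulVec, hP x hUx, hVx]
  rw [← mulVec_mulVec, hP' x hVPx, hP x hUx]

/-- `P` projects `ker U + ker V` onto `ker U` along `ker V`, up to `ker U ⊓ ker V`. -/
theorem exists_proj_ker_along_ker [Fintype l] [Fintype m] [DecidableEq l] [DecidableEq m]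
    (U : Matrix l n K) (V : Matrix m n K) :
    ∃ P : Matrix n n K, U * P = 0 ∧ (∀ x, V *ᵥ x = 0 → P *ᵥ x = 0) ∧
      ∀ x, U *ᵥ x = 0 → V *ᵥ (P *ᵥ x) = V *ᵥ x := by
  obtain ⟨P, hUP, hP⟩ := exists_mul_eq_zero_and_mulVec_eq_self U
  obtain ⟨W, hW⟩ := exists_mul_mul_eq_self (V * P)
  refine ⟨P * W * V, ?_, fun x hx => ?_, fun x hx => ?_⟩
  · rw [← Matrix.mul_assoc, ← Matrix.mul_assoc, hUP, Matrix.zero_mul, Matrix.zero_mul]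
  · rw [← mulVec_mulVec, hx, mulVec_zero]
  · have h := congrArg (· *ᵥ x) hW
    simp only [← mulVec_mulVec, hP x hx] at h ⊢
    exact h

theorem exists_eq_conjTranspose_mul_mul [StarRing K] [Fintype k] [Fintype l] [Fintype m]
    [DecidableEq k] [DecidableEq l] [DecidableEq m] {U : Matrix l k K} {V : Matrix m n K}
    {A : Matrix k n K} (hV : ∀ x, V *ᵥ x = 0 → A *ᵥ x = 0)
    (hU : ∀ x, U *ᵥ x = 0 → Aᴴ *ᵥ x = 0) : ∃ X : Matrix l m K, A = Uᴴ * X * V := by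
  obtain ⟨Z, hZ⟩ := exists_eq_mul_of_ker_le hU
  obtain ⟨W, hW⟩ := exists_mul_mul_eq_self V
  refine ⟨Zᴴ * W, ?_⟩
  calc A = A * W * V := (mul_mul_eq_of_ker_le hW hV).symm
    _ = (Z * U)ᴴ * W * V := by rw [← hZ, conjTranspose_conjTranspose]
    _ = Uᴴ * (Zᴴ * W) * V := by rw [conjTranspose_mul, Matrix.mul_assoc Uᴴ]

end Field

section RCLike

variable {𝕜 : Type*} [RCLike 𝕜] {Q : Matrix n n 𝕜}

theorem posSemidef_conjTranspose_mul_mul_of_nonneg [Fintype k] (hQ : Q.IsHermitian)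
    {U : Matrix l n 𝕜} (hU : ∀ x, U *ᵥ x = 0 → 0 ≤ star x ⬝ᵥ (Q *ᵥ x)) {B : Matrix n k 𝕜}
    (hB : U * B = 0) :
    (Bᴴ * Q * B).PosSemidef := by
  refine .of_dotProduct_mulVec_nonneg (isHermitian_conjTranspose_mul_mul B hQ) fun x => ?_
  simpa only [star_mulVec, dotProduct_mulVec, vecMul_vecMul] using
    hU (B *ᵥ x) (by rw [mulVec_mulVec, hB, zero_mulVec])

theorem posSemidef_conjTranspose_mul_mul_iff [Fintype k] (hQ : Q.IsHermitian) {U : Matrix l n 𝕜}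
    {B : Matrix n k 𝕜} (hB : U * B = 0) (hBU : ∀ x, U *ᵥ x = 0 → ∃ y, B *ᵥ y = x) :
    (Bᴴ * Q * B).PosSemidef ↔ ∀ x, U *ᵥ x = 0 → 0 ≤ star x ⬝ᵥ (Q *ᵥ x) := by
  refine ⟨fun h x hx => ?_, fun hU => posSemidef_conjTranspose_mul_mul_of_nonneg hQ hU hB⟩
  obtain ⟨y, rfl⟩ := hBU x hx
  simpa only [star_mulVec, dotProduct_mulVec, vecMul_vecMul] using h.dotProduct_mulVec_nonneg y

theorem dotProduct_add_conjTranspose_mul_mul_mulVec [Fintype l] [Fintype m] {U : Matrix l n 𝕜}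
    {V : Matrix m n 𝕜} (X : Matrix l m 𝕜) {x : n → 𝕜} (hx : U *ᵥ x = 0) :
    star x ⬝ᵥ ((Q + Uᴴ * X * V + Vᴴ * Xᴴ * U) *ᵥ x) = star x ⬝ᵥ (Q *ᵥ x) := by
  simp only [add_mulVec, dotProduct_add, ← mulVec_mulVec, hx, mulVec_zero, add_zero]
  rw [dotProduct_mulVec (star x) Uᴴ, vecMul_conjTranspose, star_star, hx, star_zero,
    zero_dotProduct, add_zero]

theorem add_conjTranspose_mul_mul_mulVec [Fintype l] [Fintype m] {U : Matrix l n 𝕜}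
    {V : Matrix m n 𝕜} (X : Matrix l m 𝕜) {x : n → 𝕜} (hUx : U *ᵥ x = 0) (hVx : V *ᵥ x = 0) :
    (Q + Uᴴ * X * V + Vᴴ * Xᴴ * U) *ᵥ x = Q *ᵥ x := by
  simp only [add_mulVec, ← mulVec_mulVec, hUx, hVx, mulVec_zero, add_zero]

theorem nonneg_on_ker_of_posSemidef [Fintype l] [Fintype m] {U : Matrix l n 𝕜}
    {V : Matrix m n 𝕜} {X : Matrix l m 𝕜} (h : (Q + Uᴴ * X * V + Vᴴ * Xᴴ * U).PosSemidef) :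
    (∀ x, U *ᵥ x = 0 → 0 ≤ star x ⬝ᵥ (Q *ᵥ x)) ∧ (∀ x, V *ᵥ x = 0 → 0 ≤ star x ⬝ᵥ (Q *ᵥ x)) ∧
      ∀ ξ, U *ᵥ ξ = 0 → V *ᵥ ξ = 0 → star ξ ⬝ᵥ (Q *ᵥ ξ) = 0 → Q *ᵥ ξ = 0 := by
  refine ⟨fun x hx => ?_, fun x hx => ?_, fun ξ hUξ hVξ hξ => ?_⟩
  · rw [← dotProduct_add_conjTranspose_mul_mul_mulVec X hx]
    exact h.dotProduct_mulVec_nonneg x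
  · have h' : (Q + Vᴴ * Xᴴ * U + Uᴴ * Xᴴᴴ * V).PosSemidef := by
      rwa [conjTranspose_conjTranspose, add_right_comm]
    rw [← dotProduct_add_conjTranspose_mul_mul_mulVec Xᴴ hx]
    exact h'.dotProduct_mulVec_nonneg x
  · rw [← add_conjTranspose_mul_mul_mulVec X hUξ hVξ] at hξ ⊢
    exact (h.dotProduct_mulVec_zero_iff ξ).1 hξ

/-- With `1 = a + b + r`, this is `-(b + r)ᴴ G (a + r)` corrected by half of the block `rᴴ G r`,
which `A + Aᴴ` would otherwise remove twice. -/
def crossCancel [DecidableEq n] (G a b : Matrix n n 𝕜) : Matrix n n 𝕜 :=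
  (2⁻¹ : 𝕜) • ((1 - a - b)ᴴ * G * (1 - a - b)) - (1 - a)ᴴ * G * (1 - b)

theorem conjTranspose_crossCancel [DecidableEq n] {G : Matrix n n 𝕜} (hG : G.IsHermitian)
    (a b : Matrix n n 𝕜) :
    (crossCancel G a b)ᴴ = crossCancel G b a := by
  simp only [crossCancel, conjTranspose_sub, conjTranspose_smul, conjTranspose_mul,
    conjTranspose_conjTranspose, hG.eq, Matrix.mul_assoc, star_inv₀, star_ofNat,
    sub_right_comm 1 a b]

theorem add_crossCancel_add_conjTranspose [DecidableEq n] {G : Matrix n n 𝕜} (hG : G.IsHermitian)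
    (a b : Matrix n n 𝕜) :
    G + crossCancel G a b + (crossCancel G a b)ᴴ = aᴴ * G * a + bᴴ * G * b := by
  have key : G + (1 - a - b)ᴴ * G * (1 - a - b) - (1 - a)ᴴ * G * (1 - b) - (1 - b)ᴴ * G * (1 - a)
      = aᴴ * G * a + bᴴ * G * b := by
    simp only [conjTranspose_sub, conjTranspose_one]
    noncomm_ring
  rw [conjTranspose_crossCancel hG, ← key, crossCancel, crossCancel, sub_right_comm 1 b a]
  module

theorem crossCancel_mulVec_eq_zero [DecidableEq n] {U : Matrix l n 𝕜} {V : Matrix m n 𝕜}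
    {G a b : Matrix n n 𝕜}
    (hG : ∀ x, U *ᵥ x = 0 → V *ᵥ x = 0 → G *ᵥ x = 0) (ha : ∀ x, V *ᵥ x = 0 → a *ᵥ x = 0)
    (hVb : V * b = 0) (hUb : ∀ x, V *ᵥ x = 0 → U *ᵥ (b *ᵥ x) = U *ᵥ x) {x : n → 𝕜}
    (hx : V *ᵥ x = 0) : crossCancel G a b *ᵥ x = 0 := by
  have hGb : G *ᵥ (x - b *ᵥ x) = 0 := by
    refine hG _ ?_ ?_
    · rw [mulVec_sub, hUb x hx, sub_self]
    · rw [mulVec_sub, mulVec_mulVec, hVb, zero_mulVec, hx, sub_self]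
  have hr : (1 - a - b) *ᵥ x = x - b *ᵥ x := by
    rw [sub_mulVec, sub_mulVec, one_mulVec, ha x hx, sub_zero]
  have hb : (1 - b) *ᵥ x = x - b *ᵥ x := by rw [sub_mulVec, one_mulVec]
  simp only [crossCancel, sub_mulVec, smul_mulVec, ← mulVec_mulVec, hr, hb, hGb, mulVec_zero,
    smul_zero, sub_zero]

/-- `K * C` is a `Q`-orthogonal projection onto the range of `K`; it exists because the
`Q`-isotropic vectors of that range lie in `ker Q`. -/
theorem exists_conjTranspose_mul_mul_eq [Fintype k] [DecidableEq k] (hQ : Q.IsHermitian)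
    (K : Matrix n k 𝕜) (hK : ∀ z, star (K *ᵥ z) ⬝ᵥ (Q *ᵥ (K *ᵥ z)) = 0 → Q *ᵥ (K *ᵥ z) = 0) :
    ∃ C : Matrix k n 𝕜, (K * C)ᴴ * Q * (K * C) = Q * (K * C) ∧ Q * (K * C) * K = Q * K := by
  set M := Kᴴ * Q * K
  have hM : Mᴴ = M := isHermitian_conjTranspose_mul_mul K hQ
  obtain ⟨D, hD⟩ : ∃ D, Q * K = D * M := exists_eq_mul_of_ker_le fun z hz => by
    rw [← mulVec_mulVec]
    refine hK z ?_
    rw [star_mulVec, ← dotProduct_mulVec, mulVec_mulVec, mulVec_mulVec]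
    change star z ⬝ᵥ (M *ᵥ z) = 0
    rw [hz, dotProduct_zero]
  have hMD : M * Dᴴ = Kᴴ * Q := by
    rw [← hM, ← conjTranspose_mul, ← hD, conjTranspose_mul, hQ.eq]
  refine ⟨Dᴴ, ?_, ?_⟩
  · calc (K * Dᴴ)ᴴ * Q * (K * Dᴴ) = D * M * Dᴴ := by
          simp only [M, conjTranspose_mul, conjTranspose_conjTranspose, Matrix.mul_assoc]
      _ = Q * (K * Dᴴ) := by rw [← hD, Matrix.mul_assoc]
  · calc Q * (K * Dᴴ) * K = D * (M * Dᴴ) * K := by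
          rw [← Matrix.mul_assoc, hD, Matrix.mul_assoc D]
      _ = Q * K := by rw [hMD, Matrix.mul_assoc, hD]

theorem eq_conjTranspose_mul_mul_add [DecidableEq n] (hQ : Q.IsHermitian) {E : Matrix n n 𝕜}
    (hE : Eᴴ * Q * E = Q * E) : Q = Eᴴ * Q * E + (1 - E)ᴴ * Q * (1 - E) := by
  have hE' : Eᴴ * Q * E = Eᴴ * Q := by
    simpa only [conjTranspose_mul, conjTranspose_conjTranspose, hQ.eq, Matrix.mul_assoc] using
      congrArg conjTranspose hE
  have h : (1 - E)ᴴ * Q * (1 - E) = Q - Eᴴ * Q - Q * E + Eᴴ * Q * E := by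
    simp only [conjTranspose_sub, conjTranspose_one]
    noncomm_ring
  rw [h, hE', ← hE'.symm.trans hE]
  abel

theorem exists_posSemidef_add_of_nonneg_on_ker [Fintype l] [Fintype m] [DecidableEq l]
    [DecidableEq m] [DecidableEq n] {U : Matrix l n 𝕜} {V : Matrix m n 𝕜} (hQ : Q.IsHermitian)
    (hU : ∀ x, U *ᵥ x = 0 → 0 ≤ star x ⬝ᵥ (Q *ᵥ x))
    (hV : ∀ x, V *ᵥ x = 0 → 0 ≤ star x ⬝ᵥ (Q *ᵥ x))
    (hUV : ∀ ξ, U *ᵥ ξ = 0 → V *ᵥ ξ = 0 → star ξ ⬝ᵥ (Q *ᵥ ξ) = 0 → Q *ᵥ ξ = 0) :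
    ∃ X : Matrix l m 𝕜, (Q + Uᴴ * X * V + Vᴴ * Xᴴ * U).PosSemidef := by
  obtain ⟨K, hUK, hVK, hK⟩ := exists_proj_ker_inf_ker U V
  obtain ⟨C, hE, hQEK⟩ := exists_conjTranspose_mul_mul_eq hQ K fun z =>
    hUV _ (by rw [mulVec_mulVec, hUK, zero_mulVec]) (by rw [mulVec_mulVec, hVK, zero_mulVec])
  set E := K * C
  set G := (1 - E)ᴴ * Q * (1 - E)
  have hG : G.IsHermitian := isHermitian_conjTranspose_mul_mul _ hQ
  have hGN : ∀ x, U *ᵥ x = 0 → V *ᵥ x = 0 → G *ᵥ x = 0 := fun x hUx hVx => by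
    have hQE : Q *ᵥ (E *ᵥ x) = Q *ᵥ x := by
      conv_lhs => rw [← hK x hUx hVx]
      rw [mulVec_mulVec, mulVec_mulVec, hQEK, ← mulVec_mulVec, hK x hUx hVx]
    simp only [G, ← mulVec_mulVec, sub_mulVec, one_mulVec, mulVec_sub, hQE, sub_self]
  obtain ⟨a, hUa, ha, haU⟩ := exists_proj_ker_along_ker U V
  obtain ⟨b, hVb, hb, hbV⟩ := exists_proj_ker_along_ker V U
  obtain ⟨X, hX⟩ := exists_eq_conjTranspose_mul_mul (U := U) (V := V) (A := crossCancel G a b)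
    (fun x => crossCancel_mulVec_eq_zero hGN ha hVb hbV)
    (fun x hx => by
      rw [conjTranspose_crossCancel hG]
      exact crossCancel_mulVec_eq_zero (fun y hVy hUy => hGN y hUy hVy) hb hUa haU hx)
  have hUE : U * E = 0 := by rw [← Matrix.mul_assoc, hUK, Matrix.zero_mul]
  have hVE : V * E = 0 := by rw [← Matrix.mul_assoc, hVK, Matrix.zero_mul]
  refine ⟨X, ?_⟩
  have hsplit : Q + Uᴴ * X * V + Vᴴ * Xᴴ * U = Eᴴ * Q * E + ((1 - E) * a)ᴴ * Q * ((1 - E) * a)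
      + ((1 - E) * b)ᴴ * Q * ((1 - E) * b) := by
    have hXH : Vᴴ * Xᴴ * U = (crossCancel G a b)ᴴ := by
      rw [hX, conjTranspose_mul, conjTranspose_mul, conjTranspose_conjTranspose, Matrix.mul_assoc]
    calc Q + Uᴴ * X * V + Vᴴ * Xᴴ * U
        = Eᴴ * Q * E + (G + crossCancel G a b + (crossCancel G a b)ᴴ) := by
          rw [← hX, hXH, ← add_assoc, ← add_assoc, ← eq_conjTranspose_mul_mul_add hQ hE]
      _ = _ := by
          rw [add_crossCancel_add_conjTranspose hG]
          simp only [G, conjTranspose_mul, Matrix.mul_assoc, add_assoc]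
  rw [hsplit]
  refine ((posSemidef_conjTranspose_mul_mul_of_nonneg hQ hU hUE).add
    (posSemidef_conjTranspose_mul_mul_of_nonneg hQ hU ?_)).add
    (posSemidef_conjTranspose_mul_mul_of_nonneg hQ hV ?_)
  · rw [← Matrix.mul_assoc, Matrix.mul_sub, Matrix.mul_one, hUE, sub_zero, hUa]
  · rw [← Matrix.mul_assoc, Matrix.mul_sub, Matrix.mul_one, hVE, sub_zero, hVb]

theorem exists_posSemidef_add_iff [Fintype l] [Fintype m] [DecidableEq l] [DecidableEq m]
    [DecidableEq n] {U : Matrix l n 𝕜} {V : Matrix m n 𝕜} (hQ : Q.IsHermitian) :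
    (∃ X : Matrix l m 𝕜, (Q + Uᴴ * X * V + Vᴴ * Xᴴ * U).PosSemidef) ↔
      (∀ x, U *ᵥ x = 0 → 0 ≤ star x ⬝ᵥ (Q *ᵥ x)) ∧ (∀ x, V *ᵥ x = 0 → 0 ≤ star x ⬝ᵥ (Q *ᵥ x)) ∧
        ∀ ξ, U *ᵥ ξ = 0 → V *ᵥ ξ = 0 → star ξ ⬝ᵥ (Q *ᵥ ξ) = 0 → Q *ᵥ ξ = 0 :=
  ⟨fun ⟨_, hX⟩ => nonneg_on_ker_of_posSemidef hX,
    fun ⟨hU, hV, hUV⟩ => exists_posSemidef_add_of_nonneg_on_ker hQ hU hV hUV⟩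

end RCLike

end Matrix

theorem stmt2_general {p m n k l : ℕ}
    (Q : Matrix (Fin p) (Fin p) ℂ) (hQ : Q.IsHermitian)
    (U : Matrix (Fin m) (Fin p) ℂ) (V : Matrix (Fin n) (Fin p) ℂ)
    (Up : Matrix (Fin p) (Fin k) ℂ) (Vp : Matrix (Fin p) (Fin l) ℂ)
    (hUp1 : U * Up = 0)
    (hUp2 : ∀ x, U *ᵥ x = 0 → ∃ y, Up *ᵥ y = x)
    (hVp1 : V * Vp = 0)
    (hVp2 : ∀ x, V *ᵥ x = 0 → ∃ y, Vp *ᵥ y = x) :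
    (∃ X : Matrix (Fin m) (Fin n) ℂ,
        (Q + Uᴴ * X * V + Vᴴ * Xᴴ * U).PosSemidef) ↔
      ((Upᴴ * Q * Up).PosSemidef ∧ (Vpᴴ * Q * Vp).PosSemidef ∧
        ∀ ξ : Fin p → ℂ, U *ᵥ ξ = 0 → V *ᵥ ξ = 0 →
          star ξ ⬝ᵥ (Q *ᵥ ξ) = 0 → Q *ᵥ ξ = 0) := by
  rw [posSemidef_conjTranspose_mul_mul_iff hQ hUp1 hUp2,
    posSemidef_conjTranspose_mul_mul_iff hQ hVp1 hVp2]
  exact exists_posSemidef_add_iff hQ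

/-- Non-strict projection lemma: there exists `X` with
`Q + Uᴴ X V + Vᴴ Xᴴ U ⪰ 0` iff `Uₚᴴ Q Uₚ ⪰ 0`, `Vₚᴴ Q Vₚ ⪰ 0` and every
`ξ ∈ ker U ∩ ker V` with `ξᴴ Q ξ = 0` lies in `ker Q`. Here the columns of
`Uₚ` (resp. `Vₚ`) form a basis of `ker U` (resp. `ker V`). -/
theorem stmt2 {p m n k l : ℕ}
    (Q : Matrix (Fin p) (Fin p) ℂ) (hQ : Q.IsHermitian)
    (U : Matrix (Fin m) (Fin p) ℂ) (V : Matrix (Fin n) (Fin p) ℂ)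
    (Up : Matrix (Fin p) (Fin k) ℂ) (Vp : Matrix (Fin p) (Fin l) ℂ)
    (hUp1 : U * Up = 0)
    (hUp2 : ∀ x, U *ᵥ x = 0 → ∃ y, Up *ᵥ y = x)
    (hUp3 : Function.Injective (Up.mulVec))
    (hVp1 : V * Vp = 0)
    (hVp2 : ∀ x, V *ᵥ x = 0 → ∃ y, Vp *ᵥ y = x)
    (hVp3 : Function.Injective (Vp.mulVec)) :
    (∃ X : Matrix (Fin m) (Fin n) ℂ,
        (Q + Uᴴ * X * V + Vᴴ * Xᴴ * U).PosSemidef) ↔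
      ((Upᴴ * Q * Up).PosSemidef ∧ (Vpᴴ * Q * Vp).PosSemidef ∧
        ∀ ξ : Fin p → ℂ, U *ᵥ ξ = 0 → V *ᵥ ξ = 0 →
          star ξ ⬝ᵥ (Q *ᵥ ξ) = 0 → Q *ᵥ ξ = 0) :=
  stmt2_general Q hQ U V Up Vp hUp1 hUp2 hVp1 hVp2
end

section
/- Let Q ∈ ℍ^p, U ∈ ℂ^{m×p}, V ∈ ℂ^{n×p} with im Uᴴ ∩ im Vᴴ = {0}, and suppose Uₚᴴ Q Uₚ ⪰ 0 and Vₚᴴ Q Vₚ ⪰ 0 where Uₚ, Vₚ span ker U and ker V. Then every x ∈ ker U ∩ ker V with xᴴ Q x = 0 satisfies Q x = 0. -/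
/-!
Write `x = Uₚ y`. Since `Uₚᴴ Q Uₚ ⪰ 0` and `yᴴ (Uₚᴴ Q Uₚ) y = xᴴ Q x = 0`, we get
`Uₚᴴ Q x = 0`, i.e. `Q x ⊥ im Uₚ = ker U`, so `Q x ∈ (ker U)^⊥ = im Uᴴ`. Likewise
`Q x ∈ im Vᴴ`, and these two spaces meet only in `0`.
-/

open Matrix
open scoped ComplexOrder

namespace Matrix

variable {𝕜 m n k : Type*} [RCLike 𝕜] [Fintype m] [Fintype n] [Fintype k]

theorem exists_conjTranspose_mulVec_eq_of_orthogonal_ker (A : Matrix m n 𝕜) {w : n → 𝕜}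
    (h : ∀ v, A *ᵥ v = 0 → star v ⬝ᵥ w = 0) : ∃ y, Aᴴ *ᵥ y = w := by
  classical
  have hw : WithLp.toLp 2 w ∈ (toEuclideanLin A).kerᗮ := by
    rw [Submodule.mem_orthogonal]
    intro u hu
    rw [EuclideanSpace.inner_eq_star_dotProduct, dotProduct_comm]
    exact h _ (congrArg WithLp.ofLp hu)
  rw [LinearMap.orthogonal_ker, ← toEuclideanLin_conjTranspose_eq_adjoint] at hw
  obtain ⟨y, hy⟩ := hw
  exact ⟨WithLp.ofLp y, congrArg WithLp.ofLp hy⟩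

theorem PosSemidef.conjTranspose_mulVec_mulVec_eq_zero {Q : Matrix n n 𝕜} {W : Matrix n k 𝕜}
    (hW : (Wᴴ * Q * W).PosSemidef) {y : k → 𝕜}
    (hy : star (W *ᵥ y) ⬝ᵥ Q *ᵥ (W *ᵥ y) = 0) : Wᴴ *ᵥ Q *ᵥ (W *ᵥ y) = 0 := by
  have hcomp : (Wᴴ * Q * W) *ᵥ y = Wᴴ *ᵥ Q *ᵥ (W *ᵥ y) := by
    simp only [mulVec_mulVec, Matrix.mul_assoc]
  rw [← hcomp, ← hW.dotProduct_mulVec_zero_iff, hcomp, dotProduct_mulVec, ← star_mulVec]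
  exact hy

theorem exists_conjTranspose_mulVec_eq_mulVec_of_isotropic (A : Matrix m n 𝕜)
    {Q : Matrix n n 𝕜} {W : Matrix n k 𝕜} (hW : ∀ x, A *ᵥ x = 0 → ∃ y, W *ᵥ y = x)
    (hQ : (Wᴴ * Q * W).PosSemidef) {x : n → 𝕜} (hx : A *ᵥ x = 0)
    (hxQx : star x ⬝ᵥ Q *ᵥ x = 0) : ∃ y, Aᴴ *ᵥ y = Q *ᵥ x := by
  obtain ⟨y, rfl⟩ := hW x hx
  have hWQx := hQ.conjTranspose_mulVec_mulVec_eq_zero hxQx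
  refine A.exists_conjTranspose_mulVec_eq_of_orthogonal_ker fun v hv => ?_
  obtain ⟨c, rfl⟩ := hW v hv
  rw [star_mulVec, ← dotProduct_mulVec, hWQx, dotProduct_zero]

end Matrix

theorem stmt3_general {p m n k l : ℕ}
    (Q : Matrix (Fin p) (Fin p) ℂ)
    (U : Matrix (Fin m) (Fin p) ℂ) (V : Matrix (Fin n) (Fin p) ℂ)
    (hIm : ∀ v : Fin p → ℂ, (∃ y, Uᴴ *ᵥ y = v) → (∃ z, Vᴴ *ᵥ z = v) → v = 0)
    (Up : Matrix (Fin p) (Fin k) ℂ) (Vp : Matrix (Fin p) (Fin l) ℂ)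
    (hUp2 : ∀ x, U *ᵥ x = 0 → ∃ y, Up *ᵥ y = x)
    (hVp2 : ∀ x, V *ᵥ x = 0 → ∃ y, Vp *ᵥ y = x)
    (hU : (Upᴴ * Q * Up).PosSemidef) (hV : (Vpᴴ * Q * Vp).PosSemidef) :
    ∀ x : Fin p → ℂ, U *ᵥ x = 0 → V *ᵥ x = 0 →
      star x ⬝ᵥ (Q *ᵥ x) = 0 → Q *ᵥ x = 0 := by
  intro x hUx hVx hxQx
  exact hIm _ (U.exists_conjTranspose_mulVec_eq_mulVec_of_isotropic hUp2 hU hUx hxQx)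
    (V.exists_conjTranspose_mulVec_eq_mulVec_of_isotropic hVp2 hV hVx hxQx)

/-- If `im Uᴴ ∩ im Vᴴ = {0}` and `Uₚᴴ Q Uₚ ⪰ 0`, `Vₚᴴ Q Vₚ ⪰ 0`, then every
`x ∈ ker U ∩ ker V` with `xᴴ Q x = 0` satisfies `Q x = 0`. -/
theorem stmt3 {p m n k l : ℕ}
    (Q : Matrix (Fin p) (Fin p) ℂ) (hQ : Q.IsHermitian)
    (U : Matrix (Fin m) (Fin p) ℂ) (V : Matrix (Fin n) (Fin p) ℂ)
    (hIm : ∀ v : Fin p → ℂ, (∃ y, Uᴴ *ᵥ y = v) → (∃ z, Vᴴ *ᵥ z = v) → v = 0)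
    (Up : Matrix (Fin p) (Fin k) ℂ) (Vp : Matrix (Fin p) (Fin l) ℂ)
    (hUp1 : U * Up = 0)
    (hUp2 : ∀ x, U *ᵥ x = 0 → ∃ y, Up *ᵥ y = x)
    (hUp3 : Function.Injective (Up.mulVec))
    (hVp1 : V * Vp = 0)
    (hVp2 : ∀ x, V *ᵥ x = 0 → ∃ y, Vp *ᵥ y = x)
    (hVp3 : Function.Injective (Vp.mulVec))
    (hU : (Upᴴ * Q * Up).PosSemidef) (hV : (Vpᴴ * Q * Vp).PosSemidef) :
    ∀ x : Fin p → ℂ, U *ᵥ x = 0 → V *ᵥ x = 0 →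
      star x ⬝ᵥ (Q *ᵥ x) = 0 → Q *ᵥ x = 0 :=
  stmt3_general Q U V hIm Up Vp hUp2 hVp2 hU hV
end

section
/- For the real matrices Q = [[3,1,-2],[1,1,-1],[-2,-1,1]], U = [[1,1,0],[0,1,1]] (2×3), V = [1,0,-1] (1×3): the annihilators U_⊥ = (1,-1,1)ᵀ and V_⊥ with columns (1,-1,1)ᵀ and (0,1,0)ᵀ satisfy U_⊥ᵀ Q U_⊥ = 1 > 0 and V_⊥ᵀ Q V_⊥ = [[1,-1],[-1,1]] ⪰ 0, yet im Uᵀ ∩ im Vᵀ ≠ {0}; moreover there exists a matrix X ∈ ℝ^{2×1} such that Q + Uᵀ X V + Vᵀ Xᵀ U ⪰ 0. -/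
open Matrix

/-- Algebraic example: for the given `Q`, `U`, `V` and annihilators `U_⊥`,
`V_⊥`, we have `U_⊥ᵀ Q U_⊥ = 1 ≻ 0`, `V_⊥ᵀ Q V_⊥ = [[1,-1],[-1,1]] ⪰ 0`,
`im Uᵀ ∩ im Vᵀ ≠ {0}`, and yet there exists `X` with
`Q + Uᵀ X V + Vᵀ Xᵀ U ⪰ 0`. -/
theorem stmt5 :
    let Q : Matrix (Fin 3) (Fin 3) ℝ := !![3, 1, -2; 1, 1, -1; -2, -1, 1]
    let U : Matrix (Fin 2) (Fin 3) ℝ := !![1, 1, 0; 0, 1, 1]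
    let V : Matrix (Fin 1) (Fin 3) ℝ := !![1, 0, -1]
    let Uperp : Matrix (Fin 3) (Fin 1) ℝ := !![1; -1; 1]
    let Vperp : Matrix (Fin 3) (Fin 2) ℝ := !![1, 0; -1, 1; 1, 0]
    (Uperpᵀ * Q * Uperp = !![1] ∧ (Uperpᵀ * Q * Uperp).PosDef) ∧
    (Vperpᵀ * Q * Vperp = !![1, -1; -1, 1] ∧ (Vperpᵀ * Q * Vperp).PosSemidef) ∧
    (∃ v : Fin 3 → ℝ, v ≠ 0 ∧ (∃ y, Uᵀ *ᵥ y = v) ∧ (∃ z, Vᵀ *ᵥ z = v)) ∧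
    (∃ X : Matrix (Fin 2) (Fin 1) ℝ,
      (Q + Uᵀ * X * V + Vᵀ * Xᵀ * U).PosSemidef) := by
  intro Q U V Uperp Vperp
  have h1 : Uperpᵀ * Q * Uperp = !![1] := by
    ext i j; fin_cases i <;> fin_cases j <;>
      simp [Q, Uperp, Matrix.mul_apply, Fin.sum_univ_succ] <;> norm_num
  have h2 : Vperpᵀ * Q * Vperp = !![1, -1; -1, 1] := by
    ext i j; fin_cases i <;> fin_cases j <;>
      simp [Q, Vperp, Matrix.mul_apply, Fin.sum_univ_succ] <;> norm_num
  refine ⟨⟨h1, ?_⟩, ⟨h2, ?_⟩, ?_, ?_⟩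
  · rw [h1]
    have : (!![1] : Matrix (Fin 1) (Fin 1) ℝ) = 1 := by
      ext i j; fin_cases i; fin_cases j; simp
    rw [this]; exact Matrix.PosDef.one
  · rw [h2]
    have hA : (!![1, -1; -1, 1] : Matrix (Fin 2) (Fin 2) ℝ) =
        (!![1, -1] : Matrix (Fin 1) (Fin 2) ℝ)ᴴ * (!![1, -1] : Matrix (Fin 1) (Fin 2) ℝ) := by
      ext i j; fin_cases i <;> fin_cases j <;>
        norm_num [Matrix.mul_apply, Fin.sum_univ_succ, Matrix.conjTranspose_apply]
    rw [hA]; exact Matrix.posSemidef_conjTranspose_mul_self _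
  · refine ⟨![1, 0, -1], ?_, ⟨![1, -1], ?_⟩, ⟨![1], ?_⟩⟩
    · intro h
      have := congrFun h 0
      simp at this
    · funext i; fin_cases i <;>
        simp [U, Matrix.mulVec, dotProduct, Fin.sum_univ_succ]
    · funext i; fin_cases i <;>
        simp [V, Matrix.mulVec, dotProduct, Fin.sum_univ_succ]
  · refine ⟨!![-1; 0], ?_⟩
    have hB : Q + Uᵀ * (!![-1; 0] : Matrix (Fin 2) (Fin 1) ℝ) * V
          + Vᵀ * (!![-1; 0] : Matrix (Fin 2) (Fin 1) ℝ)ᵀ * U =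
        (!![1, 0, -1; 0, 1, 0] : Matrix (Fin 2) (Fin 3) ℝ)ᴴ
          * (!![1, 0, -1; 0, 1, 0] : Matrix (Fin 2) (Fin 3) ℝ) := by
      ext i j; fin_cases i <;> fin_cases j <;>
        norm_num [Q, U, V, Matrix.mul_apply, Fin.sum_univ_succ, Matrix.conjTranspose_apply]
    rw [hB]; exact Matrix.posSemidef_conjTranspose_mul_self _
end

section
/- Let A ∈ ℝ^{n×n}. There exists a symmetric positive definite matrix P with P - AᵀPA ⪰ 0 if and only if there exist a symmetric positive definite matrix P and a matrix X ∈ ℝ^{n×n} such that the block matrix [[P, AᵀXᵀ],[XA, X + Xᵀ - P]] ⪰ 0. -/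
/-!
With `X = P` the block matrix is `[[P, AᵀP], [PA, P]]`, whose Schur complement with respect to
the invertible lower-right block `P` is exactly `P - AᵀPA`. Conversely, compressing the block
matrix by `[I; -A]` cancels every occurrence of `X` and leaves `P - AᵀPA`, which is therefore
positive semidefinite.
-/

namespace Matrix

variable {m : Type*} [Fintype m] [DecidableEq m]

theorem conjTranspose_fromRows_one_neg_mul_fromBlocks_mul {R : Type*} [Ring R] [StarRing R]
    (P A X : Matrix m m R) :
    (fromRows (1 : Matrix m m R) (-A))ᴴ * fromBlocks P (Aᴴ * Xᴴ) (X * A) (X + Xᴴ - P) *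
        fromRows (1 : Matrix m m R) (-A) = P - Aᴴ * P * A := by
  rw [conjTranspose_fromRows_eq_fromCols_conjTranspose, fromCols_mul_fromBlocks,
    fromCols_mul_fromRows]
  simp only [conjTranspose_one, conjTranspose_neg]
  noncomm_ring

theorem PosSemidef.sub_conjTranspose_mul_mul_of_fromBlocks {R : Type*} [Ring R] [PartialOrder R]
    [StarRing R] {P A X : Matrix m m R}
    (h : (fromBlocks P (Aᴴ * Xᴴ) (X * A) (X + Xᴴ - P)).PosSemidef) :
    (P - Aᴴ * P * A).PosSemidef :=
  conjTranspose_fromRows_one_neg_mul_fromBlocks_mul P A X ▸ h.conjTranspose_mul_mul_same _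

theorem PosDef.posSemidef_fromBlocks_of_posSemidef_sub {K : Type*} [Field K] [PartialOrder K]
    [StarRing K] [StarOrderedRing K] {P : Matrix m m K} (A : Matrix m m K)
    (hP : P.PosDef) (h : (P - Aᴴ * P * A).PosSemidef) :
    (fromBlocks P (Aᴴ * P) (P * A) P).PosSemidef := by
  have := hP.isUnit.invertible
  have hPA : P * A = (Aᴴ * P)ᴴ := by rw [conjTranspose_mul, hP.1.eq, conjTranspose_conjTranspose]
  rwa [hPA, PosDef.fromBlocks₂₂ _ _ hP, ← hPA, mul_inv_cancel_right_of_invertible,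
    ← Matrix.mul_assoc]

end Matrix

open Matrix

/-- There is a symmetric `P ≻ 0` with `P - AᵀPA ⪰ 0` iff there are a symmetric
`P ≻ 0` and `X` with `[[P, AᵀXᵀ],[XA, X + Xᵀ - P]] ⪰ 0`. -/
theorem stmt6 {n : ℕ} (A : Matrix (Fin n) (Fin n) ℝ) :
    (∃ P : Matrix (Fin n) (Fin n) ℝ, P.IsSymm ∧ P.PosDef ∧
        (P - Aᵀ * P * A).PosSemidef) ↔
      (∃ (P : Matrix (Fin n) (Fin n) ℝ) (X : Matrix (Fin n) (Fin n) ℝ),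
        P.IsSymm ∧ P.PosDef ∧
        (fromBlocks P (Aᵀ * Xᵀ) (X * A) (X + Xᵀ - P)).PosSemidef) := by
  simp only [← conjTranspose_eq_transpose_of_trivial]
  constructor
  · rintro ⟨P, hP, hPd, h⟩
    refine ⟨P, P, hP, hPd, ?_⟩
    rw [hPd.1.eq, add_sub_cancel_right]
    exact hPd.posSemidef_fromBlocks_of_posSemidef_sub A h
  · rintro ⟨P, X, hP, hPd, h⟩
    exact ⟨P, hP, hPd, h.sub_conjTranspose_mul_mul_of_fromBlocks⟩
end

section
/- Let A ∈ ℝ^{n×n}. There exists a symmetric positive definite matrix S with S - A S Aᵀ ⪰ 0 if and only if there exist a symmetric positive definite matrix S and a matrix X ∈ ℝ^{n×n} such that [[S, AX],[XᵀAᵀ, X + Xᵀ - S]] ⪰ 0. -/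
/-!
Taking `X = S`, the Schur complement of the lower right block `S` is `S - A S Aᵀ`.
Conversely, the Schur complement of the upper left block gives `X + Xᵀ - S ⪰ Xᵀ Aᵀ S⁻¹ A X`,
while `(X - S)ᵀ S⁻¹ (X - S) ⪰ 0` gives `Xᵀ S⁻¹ X ⪰ X + Xᵀ - S`; together
`Xᵀ (S⁻¹ - Aᵀ S⁻¹ A) X ⪰ 0`. As `X + Xᵀ ⪰ S ≻ 0`, `X` is invertible, so `S⁻¹ - Aᵀ S⁻¹ A ⪰ 0`.
The two Schur complements of `[[S⁻¹, Aᵀ], [A, S]]` show that this is equivalent to `S - A S Aᵀ ⪰ 0`.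
-/

open Matrix
open scoped ComplexOrder

namespace Matrix

variable {𝕜 n : Type*} [RCLike 𝕜] [Fintype n] [DecidableEq n]

lemma isUnit_of_posDef_add_conjTranspose {X : Matrix n n 𝕜} (hX : (X + Xᴴ).PosDef) :
    IsUnit X := by
  rw [← mulVec_injective_iff_isUnit]
  refine (injective_iff_map_eq_zero X.mulVecLin).mpr fun v hv => ?_
  rw [mulVecLin_apply] at hv
  by_contra hv0
  have hpos := (posDef_iff_dotProduct_mulVec.mp hX).2 hv0
  rw [add_mulVec, dotProduct_add, hv, dotProduct_mulVec, ← star_mulVec, hv] at hpos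
  simp at hpos

namespace PosDef

lemma posSemidef_conjTranspose_mul_inv_mul_sub {S : Matrix n n 𝕜} (hS : S.PosDef)
    (X : Matrix n n 𝕜) :
    (Xᴴ * S⁻¹ * X - (X + Xᴴ - S)).PosSemidef := by
  have hdet : IsUnit S.det := (isUnit_iff_isUnit_det S).mp hS.isUnit
  convert hS.inv.posSemidef.conjTranspose_mul_mul_same (X - S) using 1
  simp only [conjTranspose_sub, hS.1.eq, sub_mul, mul_sub, Matrix.mul_assoc,
    nonsing_inv_mul _ hdet, mul_nonsing_inv_cancel_left _ _ hdet, Matrix.mul_one]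
  abel

lemma posSemidef_sub_mul_mul_conjTranspose_iff {S : Matrix n n 𝕜} (hS : S.PosDef)
    (A : Matrix n n 𝕜) :
    (S - A * S * Aᴴ).PosSemidef ↔ (S⁻¹ - Aᴴ * S⁻¹ * A).PosSemidef := by
  let := hS.isUnit.invertible
  let := hS.inv.isUnit.invertible
  have h₁₁ := hS.inv.fromBlocks₁₁ Aᴴ S
  have h₂₂ := hS.fromBlocks₂₂ S⁻¹ Aᴴ
  rw [conjTranspose_conjTranspose, inv_inv_of_invertible] at h₁₁
  rw [conjTranspose_conjTranspose] at h₂₂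
  exact h₁₁.symm.trans h₂₂

lemma posSemidef_fromBlocks_mul_self_iff {S : Matrix n n 𝕜} (hS : S.PosDef)
    (A : Matrix n n 𝕜) :
    (fromBlocks S (A * S) (A * S)ᴴ S).PosSemidef ↔ (S - A * S * Aᴴ).PosSemidef := by
  let := hS.isUnit.invertible
  rw [hS.fromBlocks₂₂, conjTranspose_mul, hS.1.eq, mul_inv_cancel_right_of_invertible,
    Matrix.mul_assoc]

lemma posSemidef_sub_mul_mul_conjTranspose_of_fromBlocks {S A X : Matrix n n 𝕜} (hS : S.PosDef)
    (h : (fromBlocks S (A * X) (A * X)ᴴ (X + Xᴴ - S)).PosSemidef) :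
    (S - A * S * Aᴴ).PosSemidef := by
  let := hS.isUnit.invertible
  have hschur : (X + Xᴴ - S - (A * X)ᴴ * S⁻¹ * (A * X)).PosSemidef :=
    (hS.fromBlocks₁₁ _ _).mp h
  have hX : IsUnit X := by
    have hXS : (X + Xᴴ - S).PosSemidef := by
      simpa only [sub_add_cancel] using
        hschur.add (hS.inv.posSemidef.conjTranspose_mul_mul_same (A * X))
    exact isUnit_of_posDef_add_conjTranspose <| by
      simpa only [sub_add_cancel] using PosDef.posSemidef_add hXS hS
  have hconj : (Xᴴ * (S⁻¹ - Aᴴ * S⁻¹ * A) * X).PosSemidef := by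
    convert hschur.add (hS.posSemidef_conjTranspose_mul_inv_mul_sub X) using 1
    simp only [conjTranspose_mul, mul_sub, sub_mul, Matrix.mul_assoc]
    abel
  rw [hS.posSemidef_sub_mul_mul_conjTranspose_iff, ← hX.posSemidef_star_left_conjugate_iff]
  exact hconj

end PosDef

end Matrix

/-- There is a symmetric `S ≻ 0` with `S - A S Aᵀ ⪰ 0` iff there are a
symmetric `S ≻ 0` and `X` with `[[S, AX],[XᵀAᵀ, X + Xᵀ - S]] ⪰ 0`. -/
theorem stmt7 {n : ℕ} (A : Matrix (Fin n) (Fin n) ℝ) :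
    (∃ S : Matrix (Fin n) (Fin n) ℝ, S.IsSymm ∧ S.PosDef ∧
        (S - A * S * Aᵀ).PosSemidef) ↔
      (∃ (S : Matrix (Fin n) (Fin n) ℝ) (X : Matrix (Fin n) (Fin n) ℝ),
        S.IsSymm ∧ S.PosDef ∧
        (fromBlocks S (A * X) (Xᵀ * Aᵀ) (X + Xᵀ - S)).PosSemidef) := by
  simp only [← conjTranspose_eq_transpose_of_trivial, ← conjTranspose_mul]
  constructor
  · rintro ⟨S, hSym, hS, h⟩
    refine ⟨S, S, hSym, hS, ?_⟩
    rwa [hS.1.eq, add_sub_cancel_right, hS.posSemidef_fromBlocks_mul_self_iff]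
  · rintro ⟨S, X, hSym, hS, h⟩
    exact ⟨S, hSym, hS, hS.posSemidef_sub_mul_mul_conjTranspose_of_fromBlocks h⟩
end

section
/- (Interpolation lemma) Let R ∈ 𝕊^m be symmetric negative definite, Q ∈ 𝕊^n, S ∈ ℝ^{n×m} with Q - S R⁻¹ Sᵀ ⪰ 0, and set P = [[Q, S],[Sᵀ, R]]. Then for vectors z ∈ ℝ^n, w ∈ ℝ^m, there exists Δ ∈ ℝ^{m×n} with w = Δ z and [I; Δ]ᵀ P [I; Δ] ⪰ 0 if and only if (z,w)ᵀ P (z,w) ≥ 0. -/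
/-!
Completing the square with `G = R⁻¹ Sᵀ` and `N = Q - S R⁻¹ Sᵀ` gives
`(x, y)ᵀ P (x, y) = xᵀ N x + (y + G x)ᵀ R (y + G x)`, so with `D = Δ + G` the matrix condition
reads `xᵀ N x + (D x)ᵀ R (D x) ≥ 0` for all `x`, and the constraint `w = Δ z` reads `D z = v`
with `v = w + G z`; the hypothesis is `zᵀ N z + vᵀ R v ≥ 0`. If `zᵀ N z = 0` then `vᵀ R v ≥ 0`
forces `v = 0` and `D = 0` works. Otherwise take the rank-one `D = v zᵀ N / zᵀ N z`: then
`(D x)ᵀ R (D x) = t² vᵀ R v` with `t = zᵀ N x / zᵀ N z`, and Cauchy–Schwarz for `N` gives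
`xᵀ N x ≥ t² zᵀ N z`, so the sum is at least `t² (zᵀ N z + vᵀ R v) ≥ 0`.
-/

open Matrix

variable {n m : Type*} [Fintype n] [Fintype m]

theorem Matrix.PosSemidef.dotProduct_mulVec_sq_le {N : Matrix n n ℝ} (hN : N.PosSemidef)
    (x y : n → ℝ) : (x ⬝ᵥ N *ᵥ y) ^ 2 ≤ (x ⬝ᵥ N *ᵥ x) * (y ⬝ᵥ N *ᵥ y) := by
  classical
  have hsymm : y ⬝ᵥ N *ᵥ x = x ⬝ᵥ N *ᵥ y := by
    rw [dotProduct_mulVec, ← mulVec_transpose, dotProduct_comm,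
      ← conjTranspose_eq_transpose_of_trivial, hN.isHermitian.eq]
  have := (toBilin' N).apply_mul_apply_le_of_forall_zero_le
    (fun x => by simpa [toBilin'_apply'] using hN.dotProduct_mulVec_nonneg x) x y
  simpa only [toBilin'_apply', hsymm, sq] using this

theorem Matrix.exists_mulVec_eq_and_forall_dotProduct_mulVec_add_nonneg {N : Matrix n n ℝ}
    (hN : N.PosSemidef) {R : Matrix m m ℝ} (hR : (-R).PosDef) {z : n → ℝ} {v : m → ℝ}
    (h : 0 ≤ z ⬝ᵥ N *ᵥ z + v ⬝ᵥ R *ᵥ v) :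
    ∃ D : Matrix m n ℝ, D *ᵥ z = v ∧ ∀ x, 0 ≤ x ⬝ᵥ N *ᵥ x + D *ᵥ x ⬝ᵥ R *ᵥ (D *ᵥ x) := by
  set a := z ⬝ᵥ N *ᵥ z
  obtain ha0 | hpos := (by simpa using hN.dotProduct_mulVec_nonneg z : 0 ≤ a).eq_or_lt
  · have hv : v = 0 := by
      by_contra hv
      have := hR.dotProduct_mulVec_pos hv
      simp only [star_trivial, neg_mulVec, dotProduct_neg] at this
      linarith
    refine ⟨0, by simp [hv], fun x => ?_⟩
    simpa using hN.dotProduct_mulVec_nonneg x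
  · have hD (x : n → ℝ) : vecMulVec v (a⁻¹ • z ᵥ* N) *ᵥ x = (a⁻¹ * (z ⬝ᵥ N *ᵥ x)) • v := by
      rw [vecMulVec_mulVec, op_smul_eq_smul, smul_dotProduct, ← dotProduct_mulVec, smul_eq_mul]
    refine ⟨vecMulVec v (a⁻¹ • z ᵥ* N), by rw [hD, inv_mul_cancel₀ hpos.ne', one_smul],
      fun x => ?_⟩
    set t := a⁻¹ * (z ⬝ᵥ N *ᵥ x)
    have hCS : t ^ 2 * a ≤ x ⬝ᵥ N *ᵥ x := by
      have hza : z ⬝ᵥ N *ᵥ x = t * a := by simp only [t]; field_simp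
      have := hN.dotProduct_mulVec_sq_le z x
      rw [hza] at this
      nlinarith
    rw [hD, mulVec_smul, dotProduct_smul, smul_dotProduct, smul_eq_mul, smul_eq_mul]
    nlinarith [mul_nonneg (sq_nonneg t) h]

theorem Matrix.posSemidef_transpose_mul_mul_iff {P : Matrix m m ℝ} (hP : P.IsHermitian)
    (L : Matrix m n ℝ) :
    (Lᵀ * P * L).PosSemidef ↔ ∀ x, 0 ≤ L *ᵥ x ⬝ᵥ P *ᵥ (L *ᵥ x) := by
  rw [← conjTranspose_eq_transpose_of_trivial, posSemidef_iff_dotProduct_mulVec,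
    and_iff_right (isHermitian_conjTranspose_mul_mul L hP)]
  simp only [star_trivial, ← mulVec_mulVec, conjTranspose_eq_transpose_of_trivial,
    dotProduct_mulVec _ Lᵀ, vecMul_transpose]

theorem Matrix.schur_complement_eq₂₂_real [DecidableEq m] (Q : Matrix n n ℝ)
    (S : Matrix n m ℝ) {R : Matrix m m ℝ} [Invertible R] (hR : R.IsHermitian)
    (x : n → ℝ) (y : m → ℝ) :
    Sum.elim x y ⬝ᵥ fromBlocks Q S Sᵀ R *ᵥ Sum.elim x y =
      ((R⁻¹ * Sᵀ) *ᵥ x + y) ⬝ᵥ R *ᵥ ((R⁻¹ * Sᵀ) *ᵥ x + y) + x ⬝ᵥ (Q - S * R⁻¹ * Sᵀ) *ᵥ x := by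
  simpa only [star_trivial, conjTranspose_eq_transpose_of_trivial, dotProduct_mulVec]
    using schur_complement_eq₂₂ Q S x y hR

theorem stmt10_general {n m : ℕ}
    (R : Matrix (Fin m) (Fin m) ℝ) (hR : (-R).PosDef)
    (Q : Matrix (Fin n) (Fin n) ℝ) (hQsymm : Q.IsSymm)
    (S : Matrix (Fin n) (Fin m) ℝ)
    (hSchur : (Q - S * R⁻¹ * Sᵀ).PosSemidef)
    (z : Fin n → ℝ) (w : Fin m → ℝ) :
    (∃ Δ : Matrix (Fin m) (Fin n) ℝ, w = Δ *ᵥ z ∧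
        ((fromRows (1 : Matrix (Fin n) (Fin n) ℝ) Δ)ᵀ *
          fromBlocks Q S Sᵀ R *
          fromRows (1 : Matrix (Fin n) (Fin n) ℝ) Δ).PosSemidef) ↔
      0 ≤ Sum.elim z w ⬝ᵥ (fromBlocks Q S Sᵀ R *ᵥ Sum.elim z w) := by
  have : Invertible R := ((IsUnit.neg_iff R).mp hR.isUnit).invertible
  have hRH : R.IsHermitian := isHermitian_neg_iff.mp hR.isHermitian
  have hP : (fromBlocks Q S Sᵀ R).IsHermitian :=
    (isHermitian_iff_isSymm.mpr hQsymm).fromBlocks (conjTranspose_eq_transpose_of_trivial S) hRH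
  simp only [posSemidef_transpose_mul_mul_iff hP, fromRows_mulVec, one_mulVec]
  constructor
  · rintro ⟨Δ, rfl, h⟩
    exact h z
  · intro h
    rw [schur_complement_eq₂₂_real Q S hRH, add_comm] at h
    obtain ⟨D, hDz, hD⟩ := exists_mulVec_eq_and_forall_dotProduct_mulVec_add_nonneg hSchur hR h
    refine ⟨D - R⁻¹ * Sᵀ, by rw [sub_mulVec, hDz, add_sub_cancel_left], fun x => ?_⟩
    rw [schur_complement_eq₂₂_real Q S hRH, ← add_mulVec, add_sub_cancel, add_comm]
    exact hD x

/-- Interpolation lemma: with `R ≺ 0`, `Q - S R⁻¹ Sᵀ ⪰ 0` and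
`P = [[Q, S],[Sᵀ, R]]`, for vectors `z`, `w` there exists `Δ` with `w = Δ z`
and `[I; Δ]ᵀ P [I; Δ] ⪰ 0` iff `(z,w)ᵀ P (z,w) ≥ 0`. -/
theorem stmt10 {n m : ℕ}
    (R : Matrix (Fin m) (Fin m) ℝ) (hRsymm : R.IsSymm) (hR : (-R).PosDef)
    (Q : Matrix (Fin n) (Fin n) ℝ) (hQsymm : Q.IsSymm)
    (S : Matrix (Fin n) (Fin m) ℝ)
    (hSchur : (Q - S * R⁻¹ * Sᵀ).PosSemidef)
    (z : Fin n → ℝ) (w : Fin m → ℝ) :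
    (∃ Δ : Matrix (Fin m) (Fin n) ℝ, w = Δ *ᵥ z ∧
        ((fromRows (1 : Matrix (Fin n) (Fin n) ℝ) Δ)ᵀ *
          fromBlocks Q S Sᵀ R *
          fromRows (1 : Matrix (Fin n) (Fin n) ℝ) Δ).PosSemidef) ↔
      0 ≤ Sum.elim z w ⬝ᵥ (fromBlocks Q S Sᵀ R *ᵥ Sum.elim z w) :=
  stmt10_general R hR Q hQsymm S hSchur z w
end

section
/- (Matrix S-lemma) Let M, N ∈ 𝕊^{n+m} with N = [[N₁₁,N₁₂],[N₁₂ᵀ,N₂₂]], N₂₂ ≺ 0 and N₁₁ - N₁₂N₂₂⁻¹N₁₂ᵀ ⪰ 0. Then [I; Z]ᵀ M [I; Z] ≻ 0 for all Z ∈ ℝ^{m×n} with [I; Z]ᵀ N [I; Z] ⪰ 0, if and only if there exists α ≥ 0 such that M - αN ≻ 0. -/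
/-!
The vector S-lemma does the main work: if `xᵀ N x ≥ 0`, `x ≠ 0` imply `xᵀ M x > 0`, then
`M - α N ≻ 0` for some `α ≥ 0`. It rests on Dines' theorem that the joint range
`{(xᵀ A x, xᵀ B x)}` of two quadratic forms is convex: on the plane spanned by two vectors the
pair of forms factors through `ζ ↦ (‖ζ‖², ζ²)`, `ζ : ℂ`, and a linear image in `ℝ²` of the solid
cone `‖w‖ ≤ ρ` in `ℝ × ℂ` is already the image of its boundary. Separating the joint range from
the open quadrant `{a < 0 < b}` gives the multipliers, and a compactness margin on the unit
sphere makes them strict.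

To reduce the matrix statement to the vector one, complete the square: with `S` the Schur
complement, `(u, v)ᵀ N (u, v) = uᵀ S u + wᵀ N₂₂ w` for `w = v + N₂₂⁻¹ N₁₂ᵀ u`, and a rank-one
correction gives `Z` with `Z u = v` and `[I; Z]ᵀ N [I; Z] ⪰ 0` (Cauchy–Schwarz for `S`). The
converse is `[I; Z]ᵀ M [I; Z] = [I; Z]ᵀ (M - α N) [I; Z] + α [I; Z]ᵀ N [I; Z]`.
-/

open Matrix

-- Move from `(ρ, w)` along a kernel direction of `L` until the cone boundary is reached.
theorem LinearMap.exists_apply_mk_norm_eq_of_norm_le {V : Type*} [AddCommGroup V] [Module ℝ V]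
    [FiniteDimensional ℝ V] (hV : Module.finrank ℝ V < 3) (L : ℝ × ℂ →ₗ[ℝ] V)
    {ρ : ℝ} {w : ℂ} (hw : ‖w‖ ≤ ρ) : ∃ w' : ℂ, L (‖w'‖, w') = L (ρ, w) := by
  have hdim : Module.finrank ℝ V < Module.finrank ℝ (ℝ × ℂ) := by
    rwa [Module.finrank_prod, Module.finrank_self, Complex.finrank_real_complex]
  obtain ⟨k, hkL, hk⟩ :=
    (Submodule.ne_bot_iff _).mp (LinearMap.ker_ne_bot_of_finrank_lt (f := L) hdim)
  set f : ℝ → ℝ := fun t => ρ + t * k.1 - ‖w + t • k.2‖ with hf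
  obtain ⟨t₁, ht₁⟩ : ∃ t₁, f t₁ ≤ 0 := by
    have hρ : 0 ≤ ρ := (norm_nonneg w).trans hw
    by_cases hk₁ : k.1 = 0
    · have hk₂ : ‖k.2‖ ≠ 0 := norm_ne_zero_iff.mpr fun h => hk (Prod.ext hk₁ h)
      refine ⟨(ρ + ‖w‖) / ‖k.2‖, ?_⟩
      have := norm_sub_norm_le (((ρ + ‖w‖) / ‖k.2‖ : ℝ) • k.2) (-w)
      rw [norm_smul, Real.norm_of_nonneg (by positivity), div_mul_cancel₀ _ hk₂,
        norm_neg, sub_neg_eq_add, add_comm _ w] at this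
      simp only [hf, hk₁, mul_zero, add_zero]
      linarith
    · refine ⟨-ρ / k.1, ?_⟩
      simp only [hf, div_mul_cancel₀ _ hk₁]
      linarith [norm_nonneg (w + (-ρ / k.1) • k.2)]
  obtain ⟨t, -, ht⟩ := intermediate_value_uIcc (a := 0) (b := t₁)
    (by fun_prop : Continuous f).continuousOn
    (Set.mem_uIcc.mpr (Or.inr ⟨ht₁, by simpa [hf] using hw⟩))
  refine ⟨w + t • k.2, ?_⟩
  have hnorm : ‖w + t • k.2‖ = ρ + t * k.1 := by simp only [hf] at ht; linarith
  have : ((‖w + t • k.2‖, w + t • k.2) : ℝ × ℂ) = (ρ, w) + t • k := by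
    rw [hnorm]; ext <;> simp
  rw [this, map_add, map_smul, LinearMap.mem_ker.mp hkL, smul_zero, add_zero]

section

variable {ι : Type*} [Fintype ι]

theorem dotProduct_self_pos {x : ι → ℝ} (hx : x ≠ 0) : 0 < x ⬝ᵥ x := by
  simpa only [star_trivial] using dotProduct_star_self_pos_iff.mpr hx

theorem smul_dotProduct_mulVec_smul (C : Matrix ι ι ℝ) (r : ℝ) (x : ι → ℝ) :
    (r • x) ⬝ᵥ C *ᵥ (r • x) = r ^ 2 * (x ⬝ᵥ C *ᵥ x) := by
  simp only [mulVec_smul, dotProduct_smul, smul_dotProduct, smul_eq_mul]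
  ring

theorem dotProduct_mulVec_smul_add_smul (C : Matrix ι ι ℝ) (x y : ι → ℝ) (a b : ℝ) :
    (a • x + b • y) ⬝ᵥ C *ᵥ (a • x + b • y) =
      a ^ 2 * (x ⬝ᵥ C *ᵥ x) + a * b * (x ⬝ᵥ C *ᵥ y + y ⬝ᵥ C *ᵥ x) + b ^ 2 * (y ⬝ᵥ C *ᵥ y) := by
  simp only [mulVec_add, mulVec_smul, dotProduct_add, add_dotProduct, dotProduct_smul,
    smul_dotProduct, smul_eq_mul]
  ring

theorem convex_range_dotProduct_mulVec_prod (A B : Matrix ι ι ℝ) :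
    Convex ℝ (Set.range fun x : ι → ℝ => (x ⬝ᵥ A *ᵥ x, x ⬝ᵥ B *ᵥ x)) := by
  rintro _ ⟨x, rfl⟩ _ ⟨y, rfl⟩ s t hs ht hst
  let ℓ (C : Matrix ι ι ℝ) : ℝ × ℂ →ₗ[ℝ] ℝ :=
    ((x ⬝ᵥ C *ᵥ x + y ⬝ᵥ C *ᵥ y) / 2) • LinearMap.fst ℝ ℝ ℂ +
      ((x ⬝ᵥ C *ᵥ x - y ⬝ᵥ C *ᵥ y) / 2) • (Complex.reLm ∘ₗ LinearMap.snd ℝ ℝ ℂ) +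
      ((x ⬝ᵥ C *ᵥ y + y ⬝ᵥ C *ᵥ x) / 2) • (Complex.imLm ∘ₗ LinearMap.snd ℝ ℝ ℂ)
  have hℓ (C : Matrix ι ι ℝ) (ρ : ℝ) (w : ℂ) : ℓ C (ρ, w) =
      ρ * ((x ⬝ᵥ C *ᵥ x + y ⬝ᵥ C *ᵥ y) / 2) + w.re * ((x ⬝ᵥ C *ᵥ x - y ⬝ᵥ C *ᵥ y) / 2) +
        w.im * ((x ⬝ᵥ C *ᵥ y + y ⬝ᵥ C *ᵥ x) / 2) := by
    simp only [ℓ, LinearMap.add_apply, LinearMap.smul_apply, LinearMap.fst_apply, smul_eq_mul,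
      LinearMap.coe_comp, Complex.reLm_coe, LinearMap.coe_snd, Function.comp_apply,
      Complex.imLm_coe]
    ring
  have hsq (C : Matrix ι ι ℝ) (ζ : ℂ) :
      (ζ.re • x + ζ.im • y) ⬝ᵥ C *ᵥ (ζ.re • x + ζ.im • y) = ℓ C (‖ζ ^ 2‖, ζ ^ 2) := by
    rw [dotProduct_mulVec_smul_add_smul, hℓ, norm_pow, Complex.sq_norm, Complex.normSq_apply]
    simp only [pow_two, Complex.mul_re, Complex.mul_im]
    ring
  have hseg (C : Matrix ι ι ℝ) :
      s * (x ⬝ᵥ C *ᵥ x) + t * (y ⬝ᵥ C *ᵥ y) = ℓ C (1, ((s - t : ℝ) : ℂ)) := by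
    rw [hℓ, Complex.ofReal_re, Complex.ofReal_im, ← hst]
    ring
  have hdim : Module.finrank ℝ (ℝ × ℝ) < 3 := by simp
  obtain ⟨w, hw⟩ := ((ℓ A).prod (ℓ B)).exists_apply_mk_norm_eq_of_norm_le hdim (ρ := 1)
    (w := ((s - t : ℝ) : ℂ))
    (by rw [Complex.norm_real, Real.norm_eq_abs, abs_le]; constructor <;> linarith)
  obtain ⟨ζ, rfl⟩ := IsAlgClosed.exists_pow_nat_eq w two_pos
  refine ⟨ζ.re • x + ζ.im • y, ?_⟩
  simp only [hsq, Prod.smul_mk, Prod.mk_add_mk, smul_eq_mul, hseg]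
  exact hw

theorem exists_mul_dotProduct_mulVec_le_mul
    {A B : Matrix ι ι ℝ} (h : ∀ x, 0 < x ⬝ᵥ B *ᵥ x → 0 ≤ x ⬝ᵥ A *ᵥ x) :
    ∃ a b : ℝ, 0 ≤ a ∧ 0 ≤ b ∧ 0 < a + b ∧
      ∀ x, b * (x ⬝ᵥ B *ᵥ x) ≤ a * (x ⬝ᵥ A *ᵥ x) := by
  have hdisj : Disjoint (Set.Iio 0 ×ˢ Set.Ioi 0)
      (Set.range fun x : ι → ℝ => (x ⬝ᵥ A *ᵥ x, x ⬝ᵥ B *ᵥ x)) := by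
    rw [Set.disjoint_left]
    rintro _ ⟨hA, hB⟩ ⟨x, rfl⟩
    exact (h x hB).not_gt hA
  obtain ⟨f, u, hfO, hfK⟩ := geometric_hahn_banach_open ((convex_Iio 0).prod (convex_Ioi 0))
    (isOpen_Iio.prod isOpen_Ioi) (convex_range_dotProduct_mulVec_prod A B) hdisj
  set a := f (1, 0)
  set b := -f (0, 1)
  have hf (p : ℝ × ℝ) : f p = a * p.1 - b * p.2 := by
    conv_lhs => rw [show p = p.1 • ((1 : ℝ), (0 : ℝ)) + p.2 • ((0 : ℝ), (1 : ℝ)) by ext <;> simp]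
    rw [map_add, map_smul, map_smul, smul_eq_mul, smul_eq_mul]
    ring
  have hO (s t : ℝ) (hs : 0 < s) (ht : 0 < t) : -(a * s) - b * t < u := by
    simpa [hf] using hfO (-s, t) ⟨neg_neg_iff_pos.mpr hs, ht⟩
  have hu : u ≤ 0 := by simpa [hf] using hfK _ ⟨0, rfl⟩
  have hab : 0 < a + b := by linarith [hO 1 1 one_pos one_pos]
  refine ⟨a, b, ?_, ?_, hab, fun x => ?_⟩
  · by_contra! ha
    have := hO 1 (-a / b) one_pos (div_pos (neg_pos.mpr ha) (by linarith))
    rw [mul_div_cancel₀ _ (by linarith : b ≠ 0)] at this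
    linarith
  · by_contra! hb
    have := hO (-b / a) 1 (div_pos (neg_pos.mpr hb) (by linarith)) one_pos
    rw [mul_div_cancel₀ _ (by linarith : a ≠ 0)] at this
    linarith
  · have hu0 : 0 ≤ u := by
      by_contra! hu'
      have hε : 0 < -u / (a + b) := div_pos (neg_pos.mpr hu') hab
      have := hO _ _ hε hε
      have : (a + b) * (-u / (a + b)) = -u := mul_div_cancel₀ _ hab.ne'
      linarith
    have := hfK _ ⟨x, rfl⟩
    rw [hf] at this
    linarith

theorem isCompact_setOf_dotProduct_self_eq_one : IsCompact {x : ι → ℝ | x ⬝ᵥ x = 1} := by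
  have : {x : ι → ℝ | x ⬝ᵥ x = 1} = (EuclideanSpace.equiv ι ℝ).symm ⁻¹' Metric.sphere 0 1 := by
    ext x
    simp [EuclideanSpace.norm_eq, dotProduct, ← pow_two]
  rw [this]
  exact (EuclideanSpace.equiv ι ℝ).symm.toHomeomorph.isCompact_preimage.mpr (isCompact_sphere 0 1)

theorem mul_dotProduct_self_le_of_forall_sphere {g : (ι → ℝ) → ℝ}
    (hg : ∀ (r : ℝ) x, g (r • x) = r ^ 2 * g x) {c : ℝ}
    (h : ∀ y : ι → ℝ, y ⬝ᵥ y = 1 → c ≤ g y) (x : ι → ℝ) : c * (x ⬝ᵥ x) ≤ g x := by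
  rcases eq_or_ne x 0 with rfl | hx
  · simp [show g 0 = 0 by simpa using hg 0 0]
  have hxx := dotProduct_self_pos hx
  set r := √(x ⬝ᵥ x)
  have hr : r ^ 2 = x ⬝ᵥ x := Real.sq_sqrt hxx.le
  have hr0 : r ≠ 0 := (Real.sqrt_pos.mpr hxx).ne'
  have hy : (r⁻¹ • x) ⬝ᵥ (r⁻¹ • x) = 1 := by
    simp only [dotProduct_smul, smul_dotProduct, smul_eq_mul, ← mul_assoc, ← hr]
    field_simp
  have := h _ hy
  rw [hg, inv_pow, hr, le_inv_mul_iff₀ hxx] at this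
  linarith

theorem exists_mul_dotProduct_self_le (A : Matrix ι ι ℝ) :
    ∃ c, ∀ x : ι → ℝ, c * (x ⬝ᵥ x) ≤ x ⬝ᵥ A *ᵥ x := by
  obtain ⟨c, hc⟩ := isCompact_setOf_dotProduct_self_eq_one.bddBelow_image
    (f := fun x : ι → ℝ => x ⬝ᵥ A *ᵥ x) (by fun_prop)
  exact ⟨c, mul_dotProduct_self_le_of_forall_sphere (smul_dotProduct_mulVec_smul A)
    fun y hy => hc ⟨y, hy, rfl⟩⟩

theorem exists_pos_mul_dotProduct_self_le_max {A B : Matrix ι ι ℝ}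
    (h : ∀ x ≠ 0, 0 ≤ x ⬝ᵥ B *ᵥ x → 0 < x ⬝ᵥ A *ᵥ x) :
    ∃ η > 0, ∀ x : ι → ℝ, η * (x ⬝ᵥ x) ≤ max (x ⬝ᵥ A *ᵥ x) (-(x ⬝ᵥ B *ᵥ x)) := by
  have hpos : ∀ y ∈ {x : ι → ℝ | x ⬝ᵥ x = 1}, 0 < max (y ⬝ᵥ A *ᵥ y) (-(y ⬝ᵥ B *ᵥ y)) := by
    intro y hy
    have hy0 : y ≠ 0 := by rintro rfl; simp at hy
    rcases le_or_gt 0 (y ⬝ᵥ B *ᵥ y) with hB | hB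
    · exact lt_max_of_lt_left (h y hy0 hB)
    · exact lt_max_of_lt_right (neg_pos.mpr hB)
  obtain ⟨η, hη, hηle⟩ := isCompact_setOf_dotProduct_self_eq_one.exists_forall_le'
    (by fun_prop) hpos
  refine ⟨η, hη, mul_dotProduct_self_le_of_forall_sphere (fun r x => ?_) hηle⟩
  rw [smul_dotProduct_mulVec_smul, smul_dotProduct_mulVec_smul, ← mul_neg,
    mul_max_of_nonneg _ _ (sq_nonneg r)]

theorem exists_forall_dotProduct_sub_smul_mulVec_pos {A B : Matrix ι ι ℝ}
    (h : ∀ x ≠ 0, 0 ≤ x ⬝ᵥ B *ᵥ x → 0 < x ⬝ᵥ A *ᵥ x) :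
    ∃ α : ℝ, 0 ≤ α ∧ ∀ x ≠ 0, 0 < x ⬝ᵥ (A - α • B) *ᵥ x := by
  classical
  obtain ⟨η, hη, hmargin⟩ := exists_pos_mul_dotProduct_self_le_max h
  have hshift (C : Matrix ι ι ℝ) (r : ℝ) (x : ι → ℝ) :
      x ⬝ᵥ (C + r • 1) *ᵥ x = x ⬝ᵥ C *ᵥ x + r * (x ⬝ᵥ x) := by
    simp [add_mulVec, smul_mulVec, dotProduct_add]
  -- the margin survives shifting the pair to `A - η • 1`, `B + η • 1`, which makes the
  -- resulting multipliers strict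
  obtain ⟨a, b, ha, hb, hab, hle⟩ := exists_mul_dotProduct_mulVec_le_mul
    (A := A + (-η) • 1) (B := B + η • 1) fun x hx => by
      rw [hshift] at hx ⊢
      rcases le_max_iff.mp (hmargin x) with h' | h' <;> linarith
  simp only [hshift] at hle
  have hsub (α : ℝ) (x : ι → ℝ) : x ⬝ᵥ (A - α • B) *ᵥ x = x ⬝ᵥ A *ᵥ x - α * (x ⬝ᵥ B *ᵥ x) := by
    simp [sub_mulVec, smul_mulVec, dotProduct_sub]
  rcases ha.eq_or_lt with rfl | ha
  · -- `B` is negative definite, so any large enough `α` works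
    obtain ⟨c, hc⟩ := exists_mul_dotProduct_self_le A
    have hα : 0 ≤ (|c| + 1) / η := by positivity
    refine ⟨(|c| + 1) / η, hα, fun x hx => ?_⟩
    have hxx := dotProduct_self_pos hx
    have hB : x ⬝ᵥ B *ᵥ x ≤ -η * (x ⬝ᵥ x) := by nlinarith [hle x]
    calc 0 < x ⬝ᵥ x := hxx
      _ ≤ c * (x ⬝ᵥ x) + (|c| + 1) * (x ⬝ᵥ x) := by nlinarith [neg_abs_le c]
      _ = c * (x ⬝ᵥ x) - (|c| + 1) / η * (-η * (x ⬝ᵥ x)) := by field_simp; ring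
      _ ≤ x ⬝ᵥ A *ᵥ x - (|c| + 1) / η * (x ⬝ᵥ B *ᵥ x) := by
        linarith [hc x, mul_le_mul_of_nonneg_left hB hα]
      _ = x ⬝ᵥ (A - ((|c| + 1) / η) • B) *ᵥ x := (hsub _ _).symm
  · refine ⟨b / a, by positivity, fun x hx => ?_⟩
    have hxx := dotProduct_self_pos hx
    rw [hsub, ← mul_lt_mul_iff_of_pos_left ha, mul_zero, mul_sub, ← mul_assoc,
      mul_div_cancel₀ _ ha.ne']
    nlinarith [hle x, mul_pos (mul_pos hη hab) hxx]

theorem posDef_transpose_mul_mul_of_posDef_sub_smul {κ : Type*} [Fintype κ]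
    {M N : Matrix ι ι ℝ} {α : ℝ} (hα : 0 ≤ α) (hMN : (M - α • N).PosDef) {B : Matrix ι κ ℝ}
    (hB : Function.Injective B.mulVec) (hN : (Bᵀ * N * B).PosSemidef) : (Bᵀ * M * B).PosDef := by
  have : Bᵀ * M * B = Bᴴ * (M - α • N) * B + α • (Bᵀ * N * B) := by
    rw [conjTranspose_eq_transpose_of_trivial, Matrix.mul_sub, Matrix.sub_mul, Matrix.mul_smul,
      Matrix.smul_mul, sub_add_cancel]
  rw [this]
  exact (hMN.conjTranspose_mul_mul_same hB).add_posSemidef (hN.smul hα)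

end

section

variable {p q : Type*} [Fintype p] [Fintype q]

theorem dotProduct_mulVec_neg_of_posDef_neg {T : Matrix q q ℝ} (hT : (-T).PosDef) {w : q → ℝ}
    (hw : w ≠ 0) : w ⬝ᵥ T *ᵥ w < 0 := by
  simpa [neg_mulVec] using hT.dotProduct_mulVec_pos hw

theorem dotProduct_transpose_mul_mul_mulVec (P : Matrix p p ℝ) (B : Matrix p q ℝ) (y : q → ℝ) :
    y ⬝ᵥ (Bᵀ * P * B) *ᵥ y = (B *ᵥ y) ⬝ᵥ P *ᵥ (B *ᵥ y) := by
  rw [← mulVec_mulVec, ← mulVec_mulVec, dotProduct_transpose_mulVec, dotProduct_comm]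

theorem Matrix.PosSemidef.sq_dotProduct_mulVec_le {S : Matrix p p ℝ} (hS : S.PosSemidef)
    (u y : p → ℝ) : (y ⬝ᵥ S *ᵥ u) ^ 2 ≤ (u ⬝ᵥ S *ᵥ u) * (y ⬝ᵥ S *ᵥ y) := by
  have hsymm : u ⬝ᵥ S *ᵥ y = y ⬝ᵥ S *ᵥ u := by
    rw [← dotProduct_transpose_mulVec, (isHermitian_iff_isSymm.mp hS.isHermitian).eq]
  have hquad (t : ℝ) : 0 ≤ (u ⬝ᵥ S *ᵥ u) * (t * t) + 2 * (y ⬝ᵥ S *ᵥ u) * t + y ⬝ᵥ S *ᵥ y := by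
    have := hS.dotProduct_mulVec_nonneg ((1 : ℝ) • y + t • u)
    rw [star_trivial, dotProduct_mulVec_smul_add_smul, hsymm] at this
    linarith
  have := discrim_le_zero hquad
  rw [discrim] at this
  linarith

theorem exists_mulVec_eq_forall_nonneg {S : Matrix p p ℝ} {T : Matrix q q ℝ}
    (hS : S.PosSemidef) (hT : (-T).PosDef) {u : p → ℝ} {w : q → ℝ}
    (huw : 0 ≤ u ⬝ᵥ S *ᵥ u + w ⬝ᵥ T *ᵥ w) :
    ∃ Δ : Matrix q p ℝ, Δ *ᵥ u = w ∧ ∀ y, 0 ≤ y ⬝ᵥ S *ᵥ y + (Δ *ᵥ y) ⬝ᵥ T *ᵥ (Δ *ᵥ y) := by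
  set d := u ⬝ᵥ S *ᵥ u
  have hd : 0 ≤ d := by simpa using hS.dotProduct_mulVec_nonneg u
  have hΔ (y : p → ℝ) : (d⁻¹ • vecMulVec w (S *ᵥ u)) *ᵥ y = (d⁻¹ * (y ⬝ᵥ S *ᵥ u)) • w := by
    simp [smul_mulVec, vecMulVec_mulVec, dotProduct_comm, smul_smul]
  refine ⟨d⁻¹ • vecMulVec w (S *ᵥ u), ?_, fun y => ?_⟩
  · rw [hΔ]
    rcases hd.eq_or_lt with hd0 | hd0
    · -- here `d⁻¹ = 0`, and `wᵀ T w ≥ 0` forces `w = 0`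
      by_contra hw
      have : w ≠ 0 := by rintro rfl; simp at hw
      have := dotProduct_mulVec_neg_of_posDef_neg hT this
      linarith
    · rw [inv_mul_cancel₀ hd0.ne', one_smul]
  · rw [hΔ, smul_dotProduct_mulVec_smul]
    have hcd : (d⁻¹ * (y ⬝ᵥ S *ᵥ u)) ^ 2 * d ≤ y ⬝ᵥ S *ᵥ y := by
      rcases hd.eq_or_lt with hd0 | hd0
      · simpa [← hd0] using hS.dotProduct_mulVec_nonneg y
      · rw [show (d⁻¹ * (y ⬝ᵥ S *ᵥ u)) ^ 2 * d = (y ⬝ᵥ S *ᵥ u) ^ 2 / d by field_simp,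
          div_le_iff₀ hd0]
        linarith [hS.sq_dotProduct_mulVec_le u y]
    linarith [mul_le_mul_of_nonneg_left (by linarith : -d ≤ w ⬝ᵥ T *ᵥ w)
      (sq_nonneg (d⁻¹ * (y ⬝ᵥ S *ᵥ u)))]

variable [DecidableEq q]

theorem sumElim_dotProduct_fromBlocks_mulVec_sumElim (N₁₁ : Matrix p p ℝ) (N₁₂ : Matrix p q ℝ)
    {N₂₂ : Matrix q q ℝ} (hN₂₂ : N₂₂.IsSymm) (hdet : IsUnit N₂₂.det) (u : p → ℝ) (v : q → ℝ) :
    Sum.elim u v ⬝ᵥ fromBlocks N₁₁ N₁₂ N₁₂ᵀ N₂₂ *ᵥ Sum.elim u v =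
      u ⬝ᵥ (N₁₁ - N₁₂ * N₂₂⁻¹ * N₁₂ᵀ) *ᵥ u +
        (v + (N₂₂⁻¹ * N₁₂ᵀ) *ᵥ u) ⬝ᵥ N₂₂ *ᵥ (v + (N₂₂⁻¹ * N₁₂ᵀ) *ᵥ u) := by
  set k := (N₂₂⁻¹ * N₁₂ᵀ) *ᵥ u
  have hk : N₂₂ *ᵥ k = N₁₂ᵀ *ᵥ u := by
    rw [mulVec_mulVec, ← Matrix.mul_assoc, mul_nonsing_inv _ hdet, Matrix.one_mul]
  have h₁ : k ⬝ᵥ N₂₂ *ᵥ v = v ⬝ᵥ N₁₂ᵀ *ᵥ u := by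
    rw [← dotProduct_transpose_mulVec, hN₂₂.eq, hk]
  have h₂ : k ⬝ᵥ N₁₂ᵀ *ᵥ u = u ⬝ᵥ (N₁₂ * N₂₂⁻¹ * N₁₂ᵀ) *ᵥ u := by
    rw [dotProduct_transpose_mulVec, Matrix.mul_assoc, ← mulVec_mulVec]
  have h₃ : v ⬝ᵥ N₁₂ᵀ *ᵥ u = u ⬝ᵥ N₁₂ *ᵥ v := dotProduct_transpose_mulVec _ _ _
  simp only [fromBlocks_mulVec, Sum.elim_comp_inl, Sum.elim_comp_inr, sumElim_dotProduct_sumElim,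
    sub_mulVec, dotProduct_sub, mulVec_add, hk, dotProduct_add, add_dotProduct, h₁, h₂, h₃]
  ring

variable [DecidableEq p]

theorem exists_mulVec_eq_posSemidef_transpose_mul_fromBlocks_mul {N₁₁ : Matrix p p ℝ}
    {N₁₂ : Matrix p q ℝ} {N₂₂ : Matrix q q ℝ} (hN₁₁ : N₁₁.IsSymm) (hN₂₂symm : N₂₂.IsSymm)
    (hN₂₂ : (-N₂₂).PosDef) (hS : (N₁₁ - N₁₂ * N₂₂⁻¹ * N₁₂ᵀ).PosSemidef) {u : p → ℝ} {v : q → ℝ}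
    (huv : 0 ≤ Sum.elim u v ⬝ᵥ fromBlocks N₁₁ N₁₂ N₁₂ᵀ N₂₂ *ᵥ Sum.elim u v) :
    ∃ Z : Matrix q p ℝ, Z *ᵥ u = v ∧
      ((fromRows (1 : Matrix p p ℝ) Z)ᵀ * fromBlocks N₁₁ N₁₂ N₁₂ᵀ N₂₂ *
        fromRows (1 : Matrix p p ℝ) Z).PosSemidef := by
  have hdet : IsUnit N₂₂.det := by
    simpa [isUnit_iff_isUnit_det] using hN₂₂.isUnit.neg
  rw [sumElim_dotProduct_fromBlocks_mulVec_sumElim _ _ hN₂₂symm hdet] at huv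
  obtain ⟨Δ, hΔu, hΔ⟩ := exists_mulVec_eq_forall_nonneg hS hN₂₂ huv
  refine ⟨Δ - N₂₂⁻¹ * N₁₂ᵀ, by rw [sub_mulVec, hΔu, add_sub_cancel_right], ?_⟩
  refine .of_dotProduct_mulVec_nonneg ?_ fun y => ?_
  · simpa only [conjTranspose_eq_transpose_of_trivial] using isHermitian_conjTranspose_mul_mul
      (fromRows 1 _) (isHermitian_iff_isSymm.mpr (hN₁₁.fromBlocks rfl hN₂₂symm))
  · rw [star_trivial, dotProduct_transpose_mul_mul_mulVec, fromRows_mulVec, one_mulVec,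
      sumElim_dotProduct_fromBlocks_mulVec_sumElim _ _ hN₂₂symm hdet, sub_mulVec Δ, sub_add_cancel]
    exact hΔ y

theorem dotProduct_mulVec_pos_of_forall_posSemidef_imp_posDef {M : Matrix (p ⊕ q) (p ⊕ q) ℝ}
    {N₁₁ : Matrix p p ℝ} {N₁₂ : Matrix p q ℝ} {N₂₂ : Matrix q q ℝ} (hN₁₁ : N₁₁.IsSymm)
    (hN₂₂symm : N₂₂.IsSymm) (hN₂₂ : (-N₂₂).PosDef) (hS : (N₁₁ - N₁₂ * N₂₂⁻¹ * N₁₂ᵀ).PosSemidef)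
    (h : ∀ Z : Matrix q p ℝ,
      ((fromRows (1 : Matrix p p ℝ) Z)ᵀ * fromBlocks N₁₁ N₁₂ N₁₂ᵀ N₂₂ *
        fromRows (1 : Matrix p p ℝ) Z).PosSemidef →
      ((fromRows (1 : Matrix p p ℝ) Z)ᵀ * M * fromRows (1 : Matrix p p ℝ) Z).PosDef)
    {x : p ⊕ q → ℝ} (hx : x ≠ 0) (hxN : 0 ≤ x ⬝ᵥ fromBlocks N₁₁ N₁₂ N₁₂ᵀ N₂₂ *ᵥ x) :
    0 < x ⬝ᵥ M *ᵥ x := by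
  obtain ⟨u, v, rfl⟩ : ∃ u v, x = Sum.elim u v := ⟨_, _, (Sum.elim_comp_inl_inr x).symm⟩
  obtain ⟨Z, hZu, hZ⟩ :=
    exists_mulVec_eq_posSemidef_transpose_mul_fromBlocks_mul hN₁₁ hN₂₂symm hN₂₂ hS hxN
  have hu : u ≠ 0 := by
    rintro rfl
    rw [mulVec_zero] at hZu
    exact hx (by rw [← hZu, Sum.elim_zero_zero])
  have := (h Z hZ).dotProduct_mulVec_pos hu
  rwa [star_trivial, dotProduct_transpose_mul_mul_mulVec, fromRows_mulVec, one_mulVec, hZu] at this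

end

/-- Matrix S-lemma: with `N₂₂ ≺ 0` and `N₁₁ - N₁₂ N₂₂⁻¹ N₁₂ᵀ ⪰ 0`, we have
`[I; Z]ᵀ M [I; Z] ≻ 0` for all `Z` with `[I; Z]ᵀ N [I; Z] ⪰ 0` iff there is
`α ≥ 0` with `M - αN ≻ 0`. -/
theorem stmt11 {n m : ℕ}
    (M : Matrix (Fin n ⊕ Fin m) (Fin n ⊕ Fin m) ℝ) (hMsymm : M.IsSymm)
    (N11 : Matrix (Fin n) (Fin n) ℝ) (N12 : Matrix (Fin n) (Fin m) ℝ)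
    (N22 : Matrix (Fin m) (Fin m) ℝ)
    (hN11symm : N11.IsSymm) (hN22symm : N22.IsSymm)
    (hN22 : (-N22).PosDef)
    (hSchur : (N11 - N12 * N22⁻¹ * N12ᵀ).PosSemidef) :
    (∀ Z : Matrix (Fin m) (Fin n) ℝ,
        ((fromRows (1 : Matrix (Fin n) (Fin n) ℝ) Z)ᵀ *
          fromBlocks N11 N12 N12ᵀ N22 *
          fromRows (1 : Matrix (Fin n) (Fin n) ℝ) Z).PosSemidef →
        ((fromRows (1 : Matrix (Fin n) (Fin n) ℝ) Z)ᵀ * M *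
          fromRows (1 : Matrix (Fin n) (Fin n) ℝ) Z).PosDef) ↔
      (∃ α : ℝ, 0 ≤ α ∧ (M - α • fromBlocks N11 N12 N12ᵀ N22).PosDef) := by
  have hN : (fromBlocks N11 N12 N12ᵀ N22).IsSymm := hN11symm.fromBlocks rfl hN22symm
  constructor
  · intro h
    obtain ⟨α, hα, hpos⟩ := exists_forall_dotProduct_sub_smul_mulVec_pos fun x hx hxN =>
      dotProduct_mulVec_pos_of_forall_posSemidef_imp_posDef hN11symm hN22symm hN22 hSchur h hx hxN
    refine ⟨α, hα, .of_dotProduct_mulVec_pos ?_ fun x hx => by simpa using hpos x hx⟩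
    exact isHermitian_iff_isSymm.mpr (hMsymm.sub (hN.smul α))
  · rintro ⟨α, hα, hMN⟩ Z hZ
    refine posDef_transpose_mul_mul_of_posDef_sub_smul hα hMN (fun y y' hyy' => ?_) hZ
    simpa [fromRows_mulVec] using congrArg (· ∘ Sum.inl) hyy'
end

section
/- (Non-strict Schur complement) Let Q ∈ ℍ^m, R ∈ ℍ^n, S ∈ ℂ^{m×n}. The block matrix [[Q, S],[Sᴴ, R]] ⪰ 0 if and only if R ⪰ 0, Q - S R⁺ Sᴴ ⪰ 0, and S(I − R R⁺) = 0, where R⁺ is the Moore–Penrose pseudoinverse of R. -/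
/-!
For Hermitian `R`, the Penrose identities force `R R⁺ = R⁺ R`, the orthogonal projection onto
the range of `R`. If the block matrix is positive semidefinite, every vector `(0, v)` with
`R v = 0` has zero energy and hence lies in its kernel, so `ker R ⊆ ker S`, which is
`S (I - R R⁺) = 0`. Given `S R⁺ R = S`, the congruence by the unipotent matrix
`[[I, S R⁺], [0, I]]` carries `diag(Q - S R⁺ Sᴴ, R)` to `[[Q, S], [Sᴴ, R]]`, and invertible
congruences preserve positivity in both directions.
-/

open Matrix
open scoped ComplexOrder

theorem IsSelfAdjoint.mul_comm_of_penrose {A : Type*} [Semigroup A] [StarMul A] {r g : A}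
    (hr : IsSelfAdjoint r) (h₁ : r * g * r = r) (h₃ : IsSelfAdjoint (r * g))
    (h₄ : IsSelfAdjoint (g * r)) : r * g = g * r := by
  have h₄' : r * star g = g * r := by rw [← h₄.star_eq, star_mul, hr.star_eq]
  have h₃' : star g * r = r * g := by rw [← h₃.star_eq, star_mul, hr.star_eq]
  have h₁' : r * star g * r = r := by
    simpa only [star_mul, hr.star_eq, mul_assoc] using congrArg star h₁
  calc r * g = (r * star g * r) * g := by rw [h₁']
    _ = (r * star g) * (r * g) := by rw [mul_assoc]
    _ = (g * r) * (star g * r) := by rw [h₄', h₃']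
    _ = g * (r * star g * r) := by simp only [mul_assoc]
    _ = g * r := by rw [h₁']

namespace Matrix

theorem fromBlocks_eq_mul_fromBlocks_zero_mul {m n α : Type*} [Fintype m] [Fintype n]
    [DecidableEq m] [DecidableEq n] [Ring α] [StarRing α]
    {A : Matrix m m α} {B : Matrix m n α} {D G : Matrix n n α}
    (hD : D.IsHermitian) (h : B * G * D = B) :
    fromBlocks A B Bᴴ D =
      fromBlocks 1 (B * G) 0 1 * fromBlocks (A - B * G * Bᴴ) 0 0 D *
        (fromBlocks 1 (B * G) 0 1)ᴴ := by
  have h' : D * (Gᴴ * Bᴴ) = Bᴴ := by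
    simpa only [conjTranspose_mul, hD.eq, Matrix.mul_assoc] using congrArg conjTranspose h
  rw [fromBlocks_conjTranspose, fromBlocks_multiply, fromBlocks_multiply]
  simp only [Matrix.one_mul, Matrix.mul_one, Matrix.mul_zero, Matrix.zero_mul, add_zero,
    zero_add, conjTranspose_one, conjTranspose_zero, conjTranspose_mul]
  rw [Matrix.mul_assoc (B * G) D, h', sub_add_cancel, h]

theorem posSemidef_fromBlocks_zero_iff {m n R : Type*} [Fintype m] [Fintype n]
    [Ring R] [PartialOrder R] [StarRing R] [AddLeftMono R]
    {A : Matrix m m R} {D : Matrix n n R} :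
    (fromBlocks A 0 0 D).PosSemidef ↔ A.PosSemidef ∧ D.PosSemidef := by
  refine ⟨fun h ↦ ⟨h.submatrix Sum.inl, h.submatrix Sum.inr⟩, fun ⟨hA, hD⟩ ↦ ?_⟩
  refine .of_dotProduct_mulVec_nonneg (hA.1.fromBlocks (by simp) hD.1) fun x ↦ ?_
  rw [fromBlocks_mulVec, ← Sum.elim_comp_inl_inr x, Function.star_sumElim,
    sumElim_dotProduct_sumElim]
  simpa using add_nonneg (hA.dotProduct_mulVec_nonneg _) (hD.dotProduct_mulVec_nonneg _)

namespace PosSemidef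

variable {m n l 𝕜 : Type*} [Fintype m] [Fintype n] [RCLike 𝕜]

theorem mul_eq_zero_of_conjTranspose_mul_mul_eq_zero {M : Matrix n n 𝕜}
    (hM : M.PosSemidef) {X : Matrix n l 𝕜} (h : Xᴴ * M * X = 0) : M * X = 0 := by
  classical
  open scoped MatrixOrder in
  obtain ⟨B, rfl⟩ := CStarAlgebra.nonneg_iff_eq_star_mul_self.mp hM.nonneg
  rw [star_eq_conjTranspose] at h ⊢
  have hBX : (B * X)ᴴ * (B * X) = 0 := by
    simpa only [conjTranspose_mul, Matrix.mul_assoc] using h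
  rw [Matrix.mul_assoc, conjTranspose_mul_self_eq_zero.mp hBX, Matrix.mul_zero]

theorem fromBlocks₁₂_mul_eq_zero {A : Matrix m m 𝕜} {B : Matrix m n 𝕜}
    {D : Matrix n n 𝕜} {K : Matrix n l 𝕜} (hM : (fromBlocks A B Bᴴ D).PosSemidef)
    (hK : D * K = 0) : B * K = 0 := by
  set X : Matrix (m ⊕ n) l 𝕜 := fromRows 0 K
  have hMX : fromBlocks A B Bᴴ D * X = fromRows (B * K) 0 := by
    simp [X, fromBlocks_mul_fromRows, hK]
  have hXMX : Xᴴ * fromBlocks A B Bᴴ D * X = 0 := by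
    simp [X, Matrix.mul_assoc, hMX, conjTranspose_fromRows_eq_fromCols_conjTranspose,
      fromCols_mul_fromRows]
  have hMX₀ := hM.mul_eq_zero_of_conjTranspose_mul_mul_eq_zero hXMX
  rw [hMX, ← fromRows_zero, fromRows_inj.eq_iff] at hMX₀
  exact hMX₀.1

end PosSemidef

end Matrix

theorem stmt13_general {m n : ℕ}
    (Q : Matrix (Fin m) (Fin m) ℂ)
    (R : Matrix (Fin n) (Fin n) ℂ) (hR : R.IsHermitian)
    (S : Matrix (Fin m) (Fin n) ℂ)
    (Rp : Matrix (Fin n) (Fin n) ℂ)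
    (h1 : R * Rp * R = R)
    (h3 : (R * Rp)ᴴ = R * Rp) (h4 : (Rp * R)ᴴ = Rp * R) :
    (fromBlocks Q S Sᴴ R).PosSemidef ↔
      (R.PosSemidef ∧ (Q - S * Rp * Sᴴ).PosSemidef ∧
        S * (1 - R * Rp) = 0) := by
  have hcomm : R * Rp = Rp * R := hR.isSelfAdjoint.mul_comm_of_penrose h1 h3 h4
  have hRK : R * (1 - R * Rp) = 0 := by
    rw [Matrix.mul_sub, Matrix.mul_one, hcomm, ← Matrix.mul_assoc, h1, sub_self]
  have posSemidef_iff (hS : S * (1 - R * Rp) = 0) :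
      (fromBlocks Q S Sᴴ R).PosSemidef ↔ (Q - S * Rp * Sᴴ).PosSemidef ∧ R.PosSemidef := by
    have hSRpR : S * Rp * R = S := by
      rw [Matrix.mul_sub, Matrix.mul_one, sub_eq_zero] at hS
      rw [Matrix.mul_assoc, ← hcomm, ← hS]
    have hL : IsUnit
        (fromBlocks 1 (S * Rp) 0 1 : Matrix (Fin m ⊕ Fin n) (Fin m ⊕ Fin n) ℂ) := by simp
    rw [fromBlocks_eq_mul_fromBlocks_zero_mul hR hSRpR, ← star_eq_conjTranspose,
      hL.posSemidef_star_right_conjugate_iff, posSemidef_fromBlocks_zero_iff]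
  constructor
  · intro hM
    have hS := hM.fromBlocks₁₂_mul_eq_zero hRK
    obtain ⟨hSchur, hRpsd⟩ := (posSemidef_iff hS).mp hM
    exact ⟨hRpsd, hSchur, hS⟩
  · rintro ⟨hRpsd, hSchur, hS⟩
    exact (posSemidef_iff hS).mpr ⟨hSchur, hRpsd⟩

/-- Non-strict Schur complement: `[[Q, S],[Sᴴ, R]] ⪰ 0` iff `R ⪰ 0`,
`Q - S R⁺ Sᴴ ⪰ 0` and `S(I - R R⁺) = 0`, where `R⁺` is the Moore–Penrose
pseudoinverse of `R` (characterized by the four Penrose conditions). -/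
theorem stmt13 {m n : ℕ}
    (Q : Matrix (Fin m) (Fin m) ℂ) (hQ : Q.IsHermitian)
    (R : Matrix (Fin n) (Fin n) ℂ) (hR : R.IsHermitian)
    (S : Matrix (Fin m) (Fin n) ℂ)
    (Rp : Matrix (Fin n) (Fin n) ℂ)
    (h1 : R * Rp * R = R) (h2 : Rp * R * Rp = Rp)
    (h3 : (R * Rp)ᴴ = R * Rp) (h4 : (Rp * R)ᴴ = Rp * R) :
    (fromBlocks Q S Sᴴ R).PosSemidef ↔
      (R.PosSemidef ∧ (Q - S * Rp * Sᴴ).PosSemidef ∧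
        S * (1 - R * Rp) = 0) :=
  stmt13_general Q R hR S Rp h1 h3 h4
end

section
/- (S-lemma) Let M, N ∈ 𝕊^n and suppose there exists x̄ ∈ ℝ^n with x̄ᵀ N x̄ > 0. Then xᵀ M x > 0 for all nonzero x ∈ ℝ^n with xᵀ N x ≥ 0, if and only if there exists α ≥ 0 such that M - αN ≻ 0. -/
/-!
The S-lemma is the strict form of Yuan's lemma applied to `M` and `-N`: some convex combination
`l M - (1 - l) N` is positive definite, the Slater point `x̄` forces `l > 0`, and `α = (1 - l) / l`.

Yuan's lemma (if `Q₁, Q₂` are never both negative, some `l Q₁ + (1 - l) Q₂` with `l ∈ [0, 1]` is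
nonnegative) is a connectedness argument. Otherwise `[0, 1]` is covered by the two open sets of
those `l` for which `l Q₁ + (1 - l) Q₂` is negative at a point where `Q₁ < 0`, resp. `Q₂ < 0`. At a
common `l`, the negative cone of `l Q₁ + (1 - l) Q₂` contains, after a sign change, a segment
joining such points, and somewhere on that segment `Q₁` and `Q₂` are both negative. The strict
version follows by applying this to `Qᵢ - ε P` with `P` positive definite, where `ε > 0` comes
from compactness of the unit sphere.
-/

open Matrix Set

theorem neg_or_neg_of_convex_combination_neg {l a b : ℝ} (hl : l ∈ Icc (0 : ℝ) 1)
    (h : l * a + (1 - l) * b < 0) : a < 0 ∨ b < 0 := by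
  by_contra! hab
  nlinarith [mul_nonneg hl.1 hab.1, mul_nonneg (sub_nonneg.2 hl.2) hab.2]

theorem exists_pos_mul_le_of_homogeneous {E : Type*} [NormedAddCommGroup E] [NormedSpace ℝ E]
    [ProperSpace E] {f g : E → ℝ} (hf : Continuous f) (hg : Continuous g)
    (hf_smul : ∀ (c : ℝ) x, f (c • x) = c ^ 2 * f x) (hg_smul : ∀ (c : ℝ) x, g (c • x) = c ^ 2 * g x)
    (hpos : ∀ x ≠ 0, 0 < f x) : ∃ ε > 0, ∀ x, ε * g x ≤ f x := by
  suffices ∃ ε > 0, ∀ u ∈ Metric.sphere (0 : E) 1, ε * g u ≤ f u by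
    obtain ⟨ε, hε, hsphere⟩ := this
    refine ⟨ε, hε, fun x => ?_⟩
    rcases eq_or_ne x 0 with rfl | hx
    · have hf0 : f 0 = 0 := by simpa using hf_smul 0 0
      have hg0 : g 0 = 0 := by simpa using hg_smul 0 0
      simp [hf0, hg0]
    have hxu : x = ‖x‖ • (‖x‖⁻¹ • x) := by simp [smul_smul, hx]
    rw [hxu, hf_smul, hg_smul, mul_left_comm]
    exact mul_le_mul_of_nonneg_left (hsphere _ (by simp [norm_smul, hx])) (sq_nonneg _)
  rcases subsingleton_or_nontrivial E with hE | hE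
  · exact ⟨1, one_pos, fun u hu => by simp [Subsingleton.elim u 0] at hu⟩
  have hS := isCompact_sphere (0 : E) 1
  have hne := (NormedSpace.sphere_nonempty (x := (0 : E))).2 zero_le_one
  obtain ⟨u₀, hu₀, hmin⟩ := hS.exists_isMinOn hne hf.continuousOn
  obtain ⟨v₀, -, hmax⟩ := hS.exists_isMaxOn hne hg.continuousOn
  have hm : 0 < f u₀ := hpos u₀ (ne_zero_of_mem_unit_sphere ⟨u₀, hu₀⟩)
  refine ⟨f u₀ / (|g v₀| + 1), by positivity, fun u hu => ?_⟩
  calc f u₀ / (|g v₀| + 1) * g u ≤ f u₀ / (|g v₀| + 1) * (|g v₀| + 1) :=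
        mul_le_mul_of_nonneg_left ((hmax hu).trans ((le_abs_self _).trans (by simp)))
          (by positivity)
    _ = f u₀ := div_mul_cancel₀ _ (by positivity)
    _ ≤ f u := hmin hu

namespace QuadraticMap

section Module

variable {R M N : Type*} [CommRing R] [AddCommGroup M] [Module R M] [AddCommGroup N] [Module R N]

theorem map_smul_add_smul (Q : QuadraticMap R M N) (a b : R) (x y : M) :
    Q (a • x + b • y) = (a * a) • Q x + (a * b) • polar Q x y + (b * b) • Q y := by
  have h : polar Q (a • x) (b • y) = Q (a • x + b • y) - Q (a • x) - Q (b • y) := rfl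
  rw [polar_smul_left, polar_smul_right, smul_smul, Q.map_smul, Q.map_smul] at h
  rw [h]
  abel

end Module

variable {E : Type*}

section Real

variable [AddCommGroup E] [Module ℝ E] {Q Q₁ Q₂ : QuadraticMap ℝ E ℝ}

theorem continuous_apply_convexCombination (Q : QuadraticMap ℝ E ℝ) (x y : E) :
    Continuous fun t : ℝ => Q (t • x + (1 - t) • y) := by
  simp_rw [map_smul_add_smul, smul_eq_mul]
  fun_prop

theorem neg_of_mem_segment {x y z : E} (hx : Q x < 0) (hy : Q y < 0) (hxy : polar Q x y ≤ 0)
    (hz : z ∈ segment ℝ x y) : Q z < 0 := by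
  obtain ⟨a, b, ha, hb, hab, rfl⟩ := hz
  rw [map_smul_add_smul, smul_eq_mul, smul_eq_mul, smul_eq_mul]
  rcases ha.lt_or_eq with ha | rfl
  · nlinarith [mul_pos ha ha, mul_nonneg ha.le hb, mul_nonneg hb hb]
  · obtain rfl : b = 1 := by linarith
    simpa using hy

theorem nonneg_of_negCone_subset_union {x y : E} (Q : QuadraticMap ℝ E ℝ)
    (hsep : ∀ z, 0 ≤ Q₁ z ∨ 0 ≤ Q₂ z) (hcover : ∀ z, Q z < 0 → Q₁ z < 0 ∨ Q₂ z < 0)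
    (hx : Q x < 0) (hy : Q y < 0) (hx₁ : Q₁ x < 0) : 0 ≤ Q₂ y := by
  by_contra! hy₂
  obtain ⟨y', hy', hy'₂, hxy'⟩ : ∃ y', Q y' < 0 ∧ Q₂ y' < 0 ∧ polar Q x y' ≤ 0 := by
    rcases le_total (polar Q x y) 0 with h | h
    · exact ⟨y, hy, hy₂, h⟩
    · exact ⟨-y, by rwa [QuadraticMap.map_neg], by rwa [QuadraticMap.map_neg],
        by rw [polar_neg_right]; linarith⟩
  have hseg (t : ℝ) (ht : t ∈ Icc (0 : ℝ) 1) : Q (t • x + (1 - t) • y') < 0 :=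
    neg_of_mem_segment hx hy' hxy' ⟨t, 1 - t, ht.1, by linarith [ht.2], by ring, rfl⟩
  obtain ⟨t, -, ht₁, ht₂⟩ := isPreconnected_Icc _ _
    (isOpen_lt (Q₁.continuous_apply_convexCombination x y') continuous_const)
    (isOpen_lt (Q₂.continuous_apply_convexCombination x y') continuous_const)
    (fun t ht => hcover _ (hseg t ht)) ⟨1, by simp, by simpa⟩ ⟨0, by simp, by simpa⟩
  rcases hsep (t • x + (1 - t) • y') with h | h
  · exact h.not_gt ht₁
  · exact h.not_gt ht₂

theorem exists_convex_combination_nonneg (hsep : ∀ x, 0 ≤ Q₁ x ∨ 0 ≤ Q₂ x) :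
    ∃ l ∈ Icc (0 : ℝ) 1, ∀ x, 0 ≤ l * Q₁ x + (1 - l) * Q₂ x := by
  by_contra! hneg
  have hopen (x : E) : IsOpen {l : ℝ | l * Q₁ x + (1 - l) * Q₂ x < 0} :=
    isOpen_lt (by fun_prop) continuous_const
  obtain ⟨l, hl, hu, hv⟩ := isPreconnected_Icc
    (⋃ x ∈ {x | Q₁ x < 0}, {l : ℝ | l * Q₁ x + (1 - l) * Q₂ x < 0})
    (⋃ x ∈ {x | Q₂ x < 0}, {l : ℝ | l * Q₁ x + (1 - l) * Q₂ x < 0})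
    (isOpen_biUnion fun x _ => hopen x) (isOpen_biUnion fun x _ => hopen x)
    (fun l hl => by
      obtain ⟨x, hx⟩ := hneg l hl
      simp only [mem_union, mem_iUnion₂, mem_ofPred_eq]
      exact (neg_or_neg_of_convex_combination_neg hl hx).imp (⟨x, ·, hx⟩) (⟨x, ·, hx⟩))
    (let ⟨x, hx⟩ := hneg 1 (by simp); ⟨1, by simp, mem_biUnion (by simpa using hx) hx⟩)
    (let ⟨x, hx⟩ := hneg 0 (by simp); ⟨0, by simp, mem_biUnion (by simpa using hx) hx⟩)
  simp only [mem_iUnion₂, mem_ofPred_eq] at hu hv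
  obtain ⟨x, hx₁, hx⟩ := hu
  obtain ⟨y, hy₂, hy⟩ := hv
  have hQ (z : E) : (l • Q₁ + (1 - l) • Q₂) z = l * Q₁ z + (1 - l) * Q₂ z := rfl
  refine (nonneg_of_negCone_subset_union (l • Q₁ + (1 - l) • Q₂) hsep (fun z hz => ?_)
    (by rwa [hQ]) (by rwa [hQ]) hx₁).not_gt hy₂
  exact neg_or_neg_of_convex_combination_neg hl (by rwa [hQ] at hz)

end Real

section FiniteDimensional

variable [NormedAddCommGroup E] [NormedSpace ℝ E] [FiniteDimensional ℝ E]

theorem continuous_of_finiteDimensional (Q : QuadraticMap ℝ E ℝ) : Continuous Q := by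
  let B : E →L[ℝ] E →L[ℝ] ℝ :=
    LinearMap.toContinuousLinearMap (LinearMap.toContinuousLinearMap.toLinearMap ∘ₗ Q.associated)
  have hB : ⇑Q = fun x => B x x := funext fun x => (associated_eq_self_apply ℝ Q x).symm
  rw [hB]
  fun_prop

variable (E) in
theorem exists_posDef : ∃ P : QuadraticMap ℝ E ℝ, P.PosDef := by
  let e := (Module.finBasis ℝ E).equivFun
  exact ⟨(1 : Matrix (Fin _) (Fin _) ℝ).toQuadraticForm'.comp e.toLinearMap,
    fun x hx => Matrix.PosDef.one.toQuadraticForm' (e x) (by simpa using hx)⟩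

variable {Q₁ Q₂ : QuadraticMap ℝ E ℝ}

theorem exists_convex_combination_pos (hsep : ∀ x ≠ 0, 0 < Q₁ x ∨ 0 < Q₂ x) :
    ∃ l ∈ Icc (0 : ℝ) 1, ∀ x ≠ 0, 0 < l * Q₁ x + (1 - l) * Q₂ x := by
  obtain ⟨P, hP⟩ := exists_posDef E
  obtain ⟨ε, hε, hbound⟩ := exists_pos_mul_le_of_homogeneous
    (Q₁.continuous_of_finiteDimensional.max Q₂.continuous_of_finiteDimensional)
    P.continuous_of_finiteDimensional
    (fun c x => by
      simp only [QuadraticMap.map_smul, smul_eq_mul, pow_two]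
      exact (mul_max_of_nonneg _ _ (mul_self_nonneg c)).symm)
    (fun c x => by rw [QuadraticMap.map_smul, smul_eq_mul, pow_two])
    (fun x hx => lt_max_iff.2 (hsep x hx))
  obtain ⟨l, hl, hcomb⟩ := exists_convex_combination_nonneg (Q₁ := Q₁ - ε • P) (Q₂ := Q₂ - ε • P)
    fun x => by
      simp only [_root_.sub_apply, _root_.smul_apply, smul_eq_mul, sub_nonneg]
      exact le_max_iff.1 (hbound x)
  refine ⟨l, hl, fun x hx => ?_⟩
  have h := hcomb x
  simp only [_root_.sub_apply, _root_.smul_apply, smul_eq_mul] at h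
  nlinarith [mul_pos hε (hP x hx)]

theorem s_lemma (hslater : ∃ x, 0 < Q₂ x) :
    (∀ x ≠ 0, 0 ≤ Q₂ x → 0 < Q₁ x) ↔ ∃ α : ℝ, 0 ≤ α ∧ (Q₁ - α • Q₂).PosDef := by
  constructor
  · intro h
    obtain ⟨l, ⟨hl₀, hl₁⟩, hcomb⟩ := exists_convex_combination_pos (Q₁ := Q₁) (Q₂ := -Q₂)
      fun x hx => (le_or_gt 0 (Q₂ x)).imp (h x hx) (fun h => by simpa using h)
    obtain ⟨x₀, hx₀⟩ := hslater
    have hl : 0 < l := by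
      refine hl₀.lt_of_ne' fun hl => ?_
      have := hcomb x₀ (by rintro rfl; simp at hx₀)
      simp only [hl, zero_mul, zero_add, sub_zero, one_mul, _root_.neg_apply, neg_pos] at this
      exact this.not_gt hx₀
    refine ⟨(1 - l) / l, div_nonneg (sub_nonneg.2 hl₁) hl.le, fun x hx => ?_⟩
    have := hcomb x hx
    simp only [_root_.neg_apply, _root_.sub_apply, _root_.smul_apply, smul_eq_mul] at this ⊢
    rw [div_mul_eq_mul_div, sub_div' hl.ne', lt_div_iff₀ hl]
    linarith
  · rintro ⟨α, hα, hpos⟩ x hx hx₂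
    have := hpos x hx
    simp only [_root_.sub_apply, _root_.smul_apply, smul_eq_mul] at this
    nlinarith [mul_nonneg hα hx₂]

end FiniteDimensional

end QuadraticMap

namespace Matrix

variable {ι : Type*} [Fintype ι] [DecidableEq ι]

@[simp]
theorem toQuadraticForm'_apply (A : Matrix ι ι ℝ) (x : ι → ℝ) :
    A.toQuadraticForm' x = x ⬝ᵥ (A *ᵥ x) :=
  toLinearMap₂'_apply' A x x

theorem toQuadraticForm'_sub_smul (A B : Matrix ι ι ℝ) (α : ℝ) :
    (A - α • B).toQuadraticForm' = A.toQuadraticForm' - α • B.toQuadraticForm' := by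
  ext x
  simp [sub_mulVec, smul_mulVec]

theorem posDef_iff_toQuadraticForm'_posDef {A : Matrix ι ι ℝ} (hA : A.IsSymm) :
    A.PosDef ↔ A.toQuadraticForm'.PosDef :=
  ⟨PosDef.toQuadraticForm', PosDef.of_toQuadraticForm' hA⟩

end Matrix

/-- S-lemma: if `x̄ᵀ N x̄ > 0` for some `x̄`, then `xᵀ M x > 0` for all nonzero
`x` with `xᵀ N x ≥ 0` iff there exists `α ≥ 0` with `M - αN ≻ 0`. -/
theorem stmt15 {n : ℕ} (M N : Matrix (Fin n) (Fin n) ℝ)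
    (hM : M.IsSymm) (hN : N.IsSymm)
    (hbar : ∃ xbar : Fin n → ℝ, 0 < xbar ⬝ᵥ (N *ᵥ xbar)) :
    (∀ x : Fin n → ℝ, x ≠ 0 → 0 ≤ x ⬝ᵥ (N *ᵥ x) → 0 < x ⬝ᵥ (M *ᵥ x)) ↔
      (∃ α : ℝ, 0 ≤ α ∧ (M - α • N).PosDef) := by
  simp_rw [← toQuadraticForm'_apply] at hbar ⊢
  rw [QuadraticMap.s_lemma hbar]
  refine exists_congr fun α => and_congr_right fun _ => ?_
  rw [posDef_iff_toQuadraticForm'_posDef (hM.sub (hN.smul α)), toQuadraticForm'_sub_smul]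
end

section
/- (Finsler's lemma) Let M, N ∈ 𝕊^n. Then xᵀ M x > 0 for all nonzero x ∈ ℝ^n with xᵀ N x = 0, if and only if there exists α ∈ ℝ such that M - αN ≻ 0. -/
/-!
On the plane spanned by `a` with `aᵀNa > 0` and `b` with `bᵀNb < 0`, the isotropic cone of `N`
consists of two lines, and positivity of `M` on both forces
`bᵀMb / bᵀNb < aᵀMa / aᵀNa`. So on the unit sphere the ratio `xᵀMx / xᵀNx` on `{xᵀNx < 0}`
lies strictly below its values on `{xᵀNx > 0}`, and a compactness argument turns this into
one `α` with `xᵀMx > α xᵀNx` on the whole sphere.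
-/

open Matrix

theorem exists_quadratic_root_mul_nonpos {p r : ℝ} (hp : 0 < p) (hr : r < 0) (q c : ℝ) :
    ∃ s, p * s ^ 2 + q * s + r = 0 ∧ s * c ≤ 0 := by
  set d := √(q ^ 2 - 4 * p * r)
  have hd : d ^ 2 = q ^ 2 - 4 * p * r := Real.sq_sqrt (by nlinarith)
  have hqd : |q| < d := by
    apply abs_lt_of_sq_lt_sq _ (Real.sqrt_nonneg _)
    nlinarith
  have hroot (e : ℝ) (he : e ^ 2 = q ^ 2 - 4 * p * r) :
      p * ((-q + e) / (2 * p)) ^ 2 + q * ((-q + e) / (2 * p)) + r = 0 := by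
    field_simp
    linear_combination he
  rcases le_total 0 c with hc | hc
  · refine ⟨(-q + -d) / (2 * p), hroot (-d) (by rw [neg_sq, hd]), ?_⟩
    exact mul_nonpos_of_nonpos_of_nonneg
      (div_nonpos_of_nonpos_of_nonneg (by linarith [neg_abs_le q]) (by positivity)) hc
  · refine ⟨(-q + d) / (2 * p), hroot d hd, ?_⟩
    exact mul_nonpos_of_nonneg_of_nonpos
      (div_nonneg (by linarith [le_abs_self q]) (by positivity)) hc

section Pencil

variable {X : Type*} [TopologicalSpace X] {K : Set X} {f g : X → ℝ}

theorem IsCompact.exists_forall_mul_lt_of_nonneg (hK : IsCompact K) (hf : Continuous f)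
    (hg : Continuous g) (hg_nonneg : ∀ x ∈ K, 0 ≤ g x) (hzero : ∀ x ∈ K, g x = 0 → 0 < f x) :
    ∃ α, ∀ x ∈ K, α * g x < f x := by
  -- the open sets `{-k * g < f}` increase with `k` on `{0 ≤ g}`; the disjunct makes this global
  let U : ℕ → Set X := fun k => {x | g x < 0 ∨ -k * g x < f x}
  have hU_mono : Monotone U := by
    intro k l hkl x hx
    rcases hx with hx | hx
    · exact Or.inl hx
    · refine or_iff_not_imp_left.mpr fun hgx => ?_
      have : (k : ℝ) ≤ l := by exact_mod_cast hkl
      nlinarith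
  have hU_open (k : ℕ) : IsOpen (U k) :=
    (isOpen_lt hg continuous_const).union (isOpen_lt (continuous_const.mul hg) hf)
  have hKU : K ⊆ ⋃ k, U k := by
    intro x hx
    rcases (hg_nonneg x hx).eq_or_lt with hgx | hgx
    · exact Set.mem_iUnion.mpr ⟨0, Or.inr (by simpa [← hgx] using hzero x hx hgx.symm)⟩
    · obtain ⟨k, hk⟩ := exists_nat_gt (-f x / g x)
      refine Set.mem_iUnion.mpr ⟨k, Or.inr ?_⟩
      have := (div_lt_iff₀ hgx).mp hk
      linarith
  obtain ⟨k, hk⟩ := hK.elim_directed_cover U hU_open hKU hU_mono.directed_le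
  refine ⟨-k, fun x hx => ?_⟩
  exact (hk hx).resolve_left (hg_nonneg x hx).not_gt

theorem IsCompact.isClosed_setOf_exists_le_mul (hK : IsCompact K) (hf : Continuous f)
    (hg : Continuous g) : IsClosed {α : ℝ | ∃ x ∈ K, f x ≤ α * g x} := by
  have : CompactSpace K := isCompact_iff_compactSpace.mp hK
  have hclosed : IsClosed {p : ℝ × K | f p.2 ≤ p.1 * g p.2} :=
    isClosed_le (hf.comp (continuous_subtype_val.comp continuous_snd))
      (continuous_fst.mul (hg.comp (continuous_subtype_val.comp continuous_snd)))
  convert isClosedMap_fst_of_compactSpace _ hclosed using 1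
  ext α
  simp

/-- The sets of `α` with `f ≤ α g` somewhere on `K ∩ {0 ≤ g}`, resp. on `K ∩ {g ≤ 0}`, are closed
and nonempty; if they covered `ℝ`, connectedness would give a common `α`, contradicting `hsep`. -/
theorem IsCompact.exists_forall_mul_lt (hK : IsCompact K) (hf : Continuous f)
    (hg : Continuous g) (hzero : ∀ x ∈ K, g x = 0 → 0 < f x)
    (hsep : ∀ x ∈ K, ∀ y ∈ K, 0 < g x → g y < 0 → f x * g y < f y * g x) :
    ∃ α, ∀ x ∈ K, α * g x < f x := by
  set Kpos := K ∩ {x | 0 ≤ g x}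
  set Kneg := K ∩ {x | g x ≤ 0}
  have hKpos : IsCompact Kpos := hK.inter_right (isClosed_le continuous_const hg)
  have hKneg : IsCompact Kneg := hK.inter_right (isClosed_le hg continuous_const)
  set T := {α : ℝ | ∃ x ∈ Kpos, f x ≤ α * g x}
  set T' := {α : ℝ | ∃ x ∈ Kneg, f x ≤ α * g x}
  by_contra! hcon
  have hcover : Set.univ ⊆ T ∪ T' := by
    intro α _
    obtain ⟨x, hx, hfx⟩ := hcon α
    rcases le_total 0 (g x) with hgx | hgx
    · exact Or.inl ⟨x, ⟨hx, hgx⟩, hfx⟩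
    · exact Or.inr ⟨x, ⟨hx, hgx⟩, hfx⟩
  have hT' : T'.Nonempty := by
    obtain ⟨α, hα⟩ := hKpos.exists_forall_mul_lt_of_nonneg hf hg (fun x hx => hx.2)
      fun x hx => hzero x hx.1
    refine ⟨α, (hcover trivial).resolve_left ?_⟩
    rintro ⟨x, hx, hfx⟩
    exact (hα x hx).not_ge hfx
  have hT : T.Nonempty := by
    obtain ⟨α, hα⟩ := hKneg.exists_forall_mul_lt_of_nonneg hf hg.neg
      (fun x hx => neg_nonneg.mpr hx.2) fun x hx hgx => hzero x hx.1 (neg_eq_zero.mp hgx)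
    refine ⟨-α, (hcover trivial).resolve_right ?_⟩
    rintro ⟨x, hx, hfx⟩
    exact (hα x hx).not_ge (by simpa using hfx)
  obtain ⟨α, -, ⟨x, ⟨hxK, hgx⟩, hfx⟩, ⟨y, ⟨hyK, hgy⟩, hfy⟩⟩ :=
    isPreconnected_closed_iff.mp isPreconnected_univ T T'
      (hKpos.isClosed_setOf_exists_le_mul hf hg) (hKneg.isClosed_setOf_exists_le_mul hf hg)
      hcover (by simpa using hT) (by simpa using hT')
  have hgx' : 0 < g x :=
    hgx.lt_of_ne fun h => (hzero x hxK h.symm).not_ge (by simpa [← h] using hfx)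
  have hgy' : g y < 0 :=
    hgy.lt_of_ne fun h => (hzero y hyK h).not_ge (by simpa [h] using hfy)
  have := hsep x hxK y hyK hgx' hgy'
  nlinarith

end Pencil

section QuadraticForm

variable {ι : Type*} [Fintype ι]

theorem dotProduct_mulVec_smul_add {R : Type*} [CommRing R] (A : Matrix ι ι R) (s : R)
    (a b : ι → R) :
    (s • a + b) ⬝ᵥ (A *ᵥ (s • a + b)) =
      a ⬝ᵥ (A *ᵥ a) * s ^ 2 + (a ⬝ᵥ (A *ᵥ b) + b ⬝ᵥ (A *ᵥ a)) * s + b ⬝ᵥ (A *ᵥ b) := by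
  simp only [mulVec_add, mulVec_smul, dotProduct_add, add_dotProduct, smul_dotProduct,
    dotProduct_smul, smul_eq_mul]
  ring

theorem dotProduct_mulVec_smul_self {R : Type*} [CommRing R] (A : Matrix ι ι R) (s : R)
    (a : ι → R) : (s • a) ⬝ᵥ (A *ᵥ (s • a)) = s ^ 2 * (a ⬝ᵥ (A *ᵥ a)) := by
  simpa [mul_comm] using dotProduct_mulVec_smul_add A s a 0

theorem dotProduct_sub_smul_mulVec {R : Type*} [CommRing R] (M N : Matrix ι ι R) (α : R)
    (x : ι → R) : x ⬝ᵥ ((M - α • N) *ᵥ x) = x ⬝ᵥ (M *ᵥ x) - α * (x ⬝ᵥ (N *ᵥ x)) := by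
  rw [sub_mulVec, dotProduct_sub, smul_mulVec, dotProduct_smul, smul_eq_mul]

/-- The isotropic lines `s • a + b` of `N` have parameters `s` of both signs; on one of them the
cross term of `M - α N` is `≤ 0`, with `α` chosen so that `M - α N` vanishes at `a`. -/
theorem mul_lt_mul_of_forall_isotropic_pos {M N : Matrix ι ι ℝ}
    (hP : ∀ x : ι → ℝ, x ≠ 0 → x ⬝ᵥ (N *ᵥ x) = 0 → 0 < x ⬝ᵥ (M *ᵥ x))
    {a b : ι → ℝ} (ha : 0 < a ⬝ᵥ (N *ᵥ a)) (hb : b ⬝ᵥ (N *ᵥ b) < 0) :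
    a ⬝ᵥ (M *ᵥ a) * b ⬝ᵥ (N *ᵥ b) < b ⬝ᵥ (M *ᵥ b) * a ⬝ᵥ (N *ᵥ a) := by
  by_contra! hle
  set α := a ⬝ᵥ (M *ᵥ a) / a ⬝ᵥ (N *ᵥ a)
  have hαa : a ⬝ᵥ (M *ᵥ a) = α * a ⬝ᵥ (N *ᵥ a) := (div_mul_cancel₀ _ ha.ne').symm
  have hαb : b ⬝ᵥ (M *ᵥ b) ≤ α * b ⬝ᵥ (N *ᵥ b) := by
    rw [div_mul_eq_mul_div, le_div_iff₀ ha]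
    linarith
  obtain ⟨s, hs, hsc⟩ := exists_quadratic_root_mul_nonpos ha hb (a ⬝ᵥ (N *ᵥ b) + b ⬝ᵥ (N *ᵥ a))
    (a ⬝ᵥ (M *ᵥ b) + b ⬝ᵥ (M *ᵥ a) - α * (a ⬝ᵥ (N *ᵥ b) + b ⬝ᵥ (N *ᵥ a)))
  have hz : (s • a + b) ⬝ᵥ (N *ᵥ (s • a + b)) = 0 := by
    rw [dotProduct_mulVec_smul_add]; exact hs
  have hz_ne : s • a + b ≠ 0 := by
    intro h
    rw [eq_neg_of_add_eq_zero_right h, ← neg_smul, dotProduct_mulVec_smul_self] at hb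
    nlinarith [sq_nonneg (-s)]
  have := hP _ hz_ne hz
  rw [dotProduct_mulVec_smul_add] at this
  have : a ⬝ᵥ (M *ᵥ a) * s ^ 2 + (a ⬝ᵥ (M *ᵥ b) + b ⬝ᵥ (M *ᵥ a)) * s + b ⬝ᵥ (M *ᵥ b) ≤ 0 := by
    linear_combination hsc + hαb + α * hs + s ^ 2 * hαa
  linarith

end QuadraticForm

/-- Finsler's lemma: `xᵀ M x > 0` for all nonzero `x` with `xᵀ N x = 0` iff
there exists `α ∈ ℝ` with `M - αN ≻ 0`. -/
theorem stmt16 {n : ℕ} (M N : Matrix (Fin n) (Fin n) ℝ)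
    (hM : M.IsSymm) (hN : N.IsSymm) :
    (∀ x : Fin n → ℝ, x ≠ 0 → x ⬝ᵥ (N *ᵥ x) = 0 → 0 < x ⬝ᵥ (M *ᵥ x)) ↔
      (∃ α : ℝ, (M - α • N).PosDef) := by
  have hquad (A : Matrix (Fin n) (Fin n) ℝ) : Continuous fun x : Fin n → ℝ => x ⬝ᵥ (A *ᵥ x) :=
    continuous_id.dotProduct (continuous_const.matrix_mulVec continuous_id)
  constructor
  · intro hP
    obtain ⟨α, hα⟩ :=
      (isCompact_sphere (0 : Fin n → ℝ) 1).exists_forall_mul_lt (hquad M) (hquad N)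
      (fun x hx => hP x (ne_zero_of_mem_unit_sphere ⟨x, hx⟩))
      (fun x _ y _ hx hy => mul_lt_mul_of_forall_isotropic_pos hP hx hy)
    refine ⟨α, posDef_iff_dotProduct_mulVec.mpr
      ⟨isHermitian_iff_isSymm.mpr (hM.sub (hN.smul α)), fun x hx => ?_⟩⟩
    have hu := hα _ (mem_sphere_zero_iff_norm.mpr (norm_smul_inv_norm (𝕜 := ℝ) hx))
    rw [dotProduct_mulVec_smul_self, dotProduct_mulVec_smul_self] at hu
    rw [star_trivial, dotProduct_sub_smul_mulVec]
    have : 0 < (‖x‖⁻¹) ^ 2 := by positivity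
    nlinarith
  · rintro ⟨α, hα⟩ x hx hNx
    simpa [dotProduct_sub_smul_mulVec, hNx] using hα.dotProduct_mulVec_pos hx
end
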